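/- arXiv:1910.06301 — 3 statements merged into one kernel-verified Lean document; each statement's English description precedes it below -/
import Mathlib

section
/- Let A be a right Ext-finite connected Z-algebra. Then the full subcategory Tors A of Gr A, consisting of modules all of whose elements generate right-bounded submodules, is a Serre subcategory of Gr A closed under extensions, subobjects and quotients. -/
/-- An `ι`-indexed algebra over a field `k` (a `k`-linear category with objects `ι`,
written ring-style: `H i j = Hom(O_j, O_i)`, with multiplication `H i j × H j l → H i l`). -/
structure IAlg (k : Type) [Field k] (ι : Type) where
  H : ι → ι → Type
  [grp : ∀ i j, AddCommGroup (H i j)]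
  [mod : ∀ i j, Module k (H i j)]
  mul : ∀ {i j l}, H i j → H j l → H i l
  one : ∀ i, H i i
  mul_assoc : ∀ {i j l m} (a : H i j) (b : H j l) (c : H l m),
    mul (mul a b) c = mul a (mul b c)
  one_mul : ∀ {i j} (a : H i j), mul (one i) a = a
  mul_one : ∀ {i j} (a : H i j), mul a (one j) = a
  add_mul : ∀ {i j l} (a b : H i j) (c : H j l), mul (a + b) c = mul a c + mul b c
  mul_add : ∀ {i j l} (a : H i j) (b c : H j l), mul a (b + c) = mul a b + mul a c
  smul_mul : ∀ {i j l} (c : k) (a : H i j) (b : H j l), mul (c • a) b = c • mul a b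
  mul_smul : ∀ {i j l} (c : k) (a : H i j) (b : H j l), mul a (c • b) = c • mul a b

attribute [instance] IAlg.grp IAlg.mod

variable {k : Type} [Field k] {ι : Type}

namespace IAlg

variable (A : IAlg k ι)

theorem zero_mul' {i j l : ι} (b : A.H j l) : A.mul (0 : A.H i j) b = 0 := by
  have h := A.add_mul (0 : A.H i j) 0 b
  rw [add_zero] at h
  exact (add_eq_left.mp h.symm)

theorem mul_zero' {i j l : ι} (a : A.H i j) : A.mul a (0 : A.H j l) = 0 := by
  have h := A.mul_add a (0 : A.H j l) 0
  rw [add_zero] at h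
  exact (add_eq_left.mp h.symm)

end IAlg

/-- A graded right `A`-module. -/
structure RMod (A : IAlg k ι) where
  M : ι → Type
  [grp : ∀ i, AddCommGroup (M i)]
  [mod : ∀ i, Module k (M i)]
  act : ∀ {i j}, M i → A.H i j → M j
  act_one : ∀ {i} (m : M i), act m (A.one i) = m
  act_mul : ∀ {i j l} (m : M i) (a : A.H i j) (b : A.H j l),
    act (act m a) b = act m (A.mul a b)
  add_act : ∀ {i j} (m n : M i) (a : A.H i j), act (m + n) a = act m a + act n a
  act_add : ∀ {i j} (m : M i) (a b : A.H i j), act m (a + b) = act m a + act m b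
  smul_act : ∀ {i j} (c : k) (m : M i) (a : A.H i j), act (c • m) a = c • act m a
  act_smul : ∀ {i j} (c : k) (m : M i) (a : A.H i j), act m (c • a) = c • act m a

attribute [instance] RMod.grp RMod.mod

namespace RMod

variable {A : IAlg k ι} (M : RMod A)

theorem zero_act {i j : ι} (a : A.H i j) : M.act (0 : M.M i) a = 0 := by
  have h := M.add_act (0 : M.M i) 0 a
  rw [add_zero] at h
  exact (add_eq_left.mp h.symm)

theorem act_zero {i j : ι} (m : M.M i) : M.act m (0 : A.H i j) = 0 := by
  have h := M.act_add m (0 : A.H i j) 0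
  rw [add_zero] at h
  exact (add_eq_left.mp h.symm)

theorem neg_act {i j : ι} (m : M.M i) (a : A.H i j) : M.act (-m) a = - M.act m a := by
  have h := M.add_act m (-m) a
  rw [add_neg_cancel, M.zero_act] at h
  exact (eq_neg_of_add_eq_zero_right h.symm)
end RMod

/-- A morphism of graded right `A`-modules. -/
@[ext]
structure RModHom {A : IAlg k ι} (M N : RMod A) where
  f : ∀ i, M.M i → N.M i
  map_add : ∀ (i : ι) (x y : M.M i), f i (x + y) = f i x + f i y
  map_act : ∀ {i j : ι} (x : M.M i) (a : A.H i j), f j (M.act x a) = N.act (f i x) a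

namespace RModHom

variable {A : IAlg k ι}

def id' (M : RMod A) : RModHom M M := ⟨fun _ x => x, fun _ _ _ => rfl, fun _ _ => rfl⟩

def comp {M N P : RMod A} (g : RModHom N P) (f : RModHom M N) : RModHom M P :=
  ⟨fun i x => g.f i (f.f i x),
   fun i x y => by simp only [f.map_add, g.map_add],
   fun x a => by simp only [f.map_act, g.map_act]⟩

theorem map_zero {M N : RMod A} (f : RModHom M N) (i : ι) : f.f i (0 : M.M i) = 0 := by
  have h := f.map_add i 0 0
  rw [add_zero] at h
  exact (add_eq_left.mp h.symm)

end RModHom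

open CategoryTheory in
instance RMod.category (A : IAlg k ι) : Category (RMod A) where
  Hom M N := RModHom M N
  id M := RModHom.id' M
  comp f g := g.comp f
  id_comp f := rfl
  comp_id f := rfl
  assoc f g h := rfl

/-- A graded left `A`-module. -/
structure LMod (A : IAlg k ι) where
  M : ι → Type
  [grp : ∀ i, AddCommGroup (M i)]
  [mod : ∀ i, Module k (M i)]
  act : ∀ {i j}, A.H i j → M j → M i
  one_act : ∀ {i} (m : M i), act (A.one i) m = m
  mul_act : ∀ {i j l} (a : A.H i j) (b : A.H j l) (m : M l),
    act (A.mul a b) m = act a (act b m)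
  act_add : ∀ {i j} (a : A.H i j) (m n : M j), act a (m + n) = act a m + act a n
  add_act : ∀ {i j} (a b : A.H i j) (m : M j), act (a + b) m = act a m + act b m
  smul_act : ∀ {i j} (c : k) (a : A.H i j) (m : M j), act (c • a) m = c • act a m
  act_smul : ∀ {i j} (c : k) (a : A.H i j) (m : M j), act a (c • m) = c • act a m

attribute [instance] LMod.grp LMod.mod

namespace LMod
variable {A : IAlg k ι} (M : LMod A)

theorem act_zero {i j : ι} (a : A.H i j) : M.act a (0 : M.M j) = 0 := by
  have h := M.act_add a (0 : M.M j) 0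
  rw [add_zero] at h
  exact (add_eq_left.mp h.symm)

theorem zero_act {i j : ι} (m : M.M j) : M.act (0 : A.H i j) m = 0 := by
  have h := M.add_act (0 : A.H i j) 0 m
  rw [add_zero] at h
  exact (add_eq_left.mp h.symm)

end LMod

/-- A morphism of graded left `A`-modules. -/
@[ext]
structure LModHom {A : IAlg k ι} (M N : LMod A) where
  f : ∀ i, M.M i → N.M i
  map_add : ∀ (i : ι) (x y : M.M i), f i (x + y) = f i x + f i y
  map_act : ∀ {i j : ι} (a : A.H i j) (x : M.M j), f i (M.act a x) = N.act a (f j x)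

namespace LModHom
variable {A : IAlg k ι}

def id' (M : LMod A) : LModHom M M := ⟨fun _ x => x, fun _ _ _ => rfl, fun _ _ => rfl⟩

def comp {M N P : LMod A} (g : LModHom N P) (f : LModHom M N) : LModHom M P :=
  ⟨fun i x => g.f i (f.f i x),
   fun i x y => by simp only [f.map_add, g.map_add],
   fun a x => by simp only [f.map_act, g.map_act]⟩

end LModHom

open CategoryTheory in
instance LMod.category (A : IAlg k ι) : Category (LMod A) where
  Hom M N := LModHom M N
  id M := LModHom.id' M
  comp f g := g.comp f
  id_comp f := rfl
  comp_id f := rfl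
  assoc f g h := rfl

/-- An `A`-`B`-bimodule. -/
structure BiMod (A : IAlg k ι) (B : IAlg k ι) where
  M : ι → ι → Type
  [grp : ∀ i j, AddCommGroup (M i j)]
  [mod : ∀ i j, Module k (M i j)]
  lact : ∀ {i j l}, A.H i j → M j l → M i l
  ract : ∀ {i j l}, M i j → B.H j l → M i l
  one_lact : ∀ {i j} (m : M i j), lact (A.one i) m = m
  ract_one : ∀ {i j} (m : M i j), ract m (B.one j) = m
  mul_lact : ∀ {i j l p} (a : A.H i j) (b : A.H j l) (m : M l p),
    lact (A.mul a b) m = lact a (lact b m)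
  ract_mul : ∀ {i j l p} (m : M i j) (a : B.H j l) (b : B.H l p),
    ract (ract m a) b = ract m (B.mul a b)
  lact_ract : ∀ {i j l p} (a : A.H i j) (m : M j l) (b : B.H l p),
    lact a (ract m b) = ract (lact a m) b
  lact_add : ∀ {i j l} (a : A.H i j) (m n : M j l), lact a (m + n) = lact a m + lact a n
  add_lact : ∀ {i j l} (a b : A.H i j) (m : M j l), lact (a + b) m = lact a m + lact b m
  ract_add : ∀ {i j l} (m : M i j) (a b : B.H j l), ract m (a + b) = ract m a + ract m b
  add_ract : ∀ {i j l} (m n : M i j) (a : B.H j l), ract (m + n) a = ract m a + ract n a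
  lact_smul : ∀ {i j l} (c : k) (a : A.H i j) (m : M j l), lact (c • a) m = c • lact a m
  smul_lact : ∀ {i j l} (c : k) (a : A.H i j) (m : M j l), lact a (c • m) = c • lact a m
  ract_smul : ∀ {i j l} (c : k) (m : M i j) (a : B.H j l), ract m (c • a) = c • ract m a
  smul_ract : ∀ {i j l} (c : k) (m : M i j) (a : B.H j l), ract (c • m) a = c • ract m a

attribute [instance] BiMod.grp BiMod.mod

namespace BiMod
variable {A B : IAlg k ι} (X : BiMod A B)

theorem lact_zero {i j l : ι} (a : A.H i j) : X.lact a (0 : X.M j l) = 0 := by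
  have h := X.lact_add a (0 : X.M j l) 0
  rw [add_zero] at h
  exact (add_eq_left.mp h.symm)

theorem zero_lact {i j l : ι} (m : X.M j l) : X.lact (0 : A.H i j) m = 0 := by
  have h := X.add_lact (0 : A.H i j) 0 m
  rw [add_zero] at h
  exact (add_eq_left.mp h.symm)

theorem ract_zero {i j l : ι} (m : X.M i j) : X.ract m (0 : B.H j l) = 0 := by
  have h := X.ract_add m (0 : B.H j l) 0
  rw [add_zero] at h
  exact (add_eq_left.mp h.symm)

theorem zero_ract {i j l : ι} (a : B.H j l) : X.ract (0 : X.M i j) a = 0 := by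
  have h := X.add_ract (0 : X.M i j) 0 a
  rw [add_zero] at h
  exact (add_eq_left.mp h.symm)

/-- The `i`-th row of a bimodule, a graded right `B`-module. -/
def row (i : ι) : RMod B where
  M j := X.M i j
  act m a := X.ract m a
  act_one m := X.ract_one m
  act_mul m a b := X.ract_mul m a b
  add_act m n a := X.add_ract m n a
  act_add m a b := X.ract_add m a b
  smul_act c m a := X.smul_ract c m a
  act_smul c m a := X.ract_smul c m a

/-- The `j`-th column of a bimodule, a graded left `A`-module. -/
def col (j : ι) : LMod A where
  M i := X.M i j
  act a m := X.lact a m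
  one_act m := X.one_lact m
  mul_act a b m := X.mul_lact a b m
  act_add a m n := X.lact_add a m n
  add_act a b m := X.add_lact a b m
  smul_act c a m := X.lact_smul c a m
  act_smul c a m := X.smul_lact c a m

end BiMod

/-- A morphism of `A`-`B`-bimodules. -/
@[ext]
structure BiModHom {A B : IAlg k ι} (X Y : BiMod A B) where
  f : ∀ i j, X.M i j → Y.M i j
  map_add : ∀ (i j : ι) (x y : X.M i j), f i j (x + y) = f i j x + f i j y
  map_lact : ∀ {i j l : ι} (a : A.H i j) (x : X.M j l),
    f i l (X.lact a x) = Y.lact a (f j l x)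
  map_ract : ∀ {i j l : ι} (x : X.M i j) (a : B.H j l),
    f i l (X.ract x a) = Y.ract (f i j x) a

namespace BiModHom
variable {A B : IAlg k ι}

def id' (X : BiMod A B) : BiModHom X X :=
  ⟨fun _ _ x => x, fun _ _ _ _ => rfl, fun _ _ => rfl, fun _ _ => rfl⟩

def comp {X Y Z : BiMod A B} (g : BiModHom Y Z) (f : BiModHom X Y) : BiModHom X Z :=
  ⟨fun i j x => g.f i j (f.f i j x),
   fun i j x y => by simp only [f.map_add, g.map_add],
   fun a x => by simp only [f.map_lact, g.map_lact],
   fun x a => by simp only [f.map_ract, g.map_ract]⟩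

end BiModHom

open CategoryTheory in
instance BiMod.category (A B : IAlg k ι) : Category (BiMod A B) where
  Hom X Y := BiModHom X Y
  id X := BiModHom.id' X
  comp f g := g.comp f
  id_comp f := rfl
  comp_id f := rfl
  assoc f g h := rfl
section ZPart

/-- A `ℤ`-algebra. -/
abbrev ZAlg (k : Type) [Field k] := IAlg k ℤ

variable {k : Type} [Field k]

/-- `A` is positively graded: `A_{ij} = 0` for `i > j`. -/
def IAlg.posGraded (A : ZAlg k) : Prop := ∀ i j : ℤ, j < i → ∀ a : A.H i j, a = 0

/-- `A` is connected: positively graded, and each `A_{ii}` is a division ring over `k`. -/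
def IAlg.connected (A : ZAlg k) : Prop :=
  A.posGraded ∧ ∀ i : ℤ, (A.one i ≠ 0) ∧
    ∀ a : A.H i i, a ≠ 0 → ∃ b : A.H i i, A.mul a b = A.one i ∧ A.mul b a = A.one i

variable {A : ZAlg k}

/-- A graded right module is left-bounded by `d`. -/
def RMod.leftBddBy (M : RMod A) (d : ℤ) : Prop := ∀ i : ℤ, i < d → ∀ x : M.M i, x = 0

def RMod.leftBounded (M : RMod A) : Prop := ∃ d, M.leftBddBy d

/-- A graded left module is right-bounded by `d`. -/
def LMod.rightBddBy (M : LMod A) (d : ℤ) : Prop := ∀ i : ℤ, d < i → ∀ x : M.M i, x = 0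

/-- The degree-`n` part of `M·A_{≥1}`, as a subgroup of `M_n`. -/
def RMod.aug (M : RMod A) (n : ℤ) : AddSubgroup (M.M n) :=
  AddSubgroup.closure {x | ∃ m : ℤ, m < n ∧ ∃ (y : M.M m) (b : A.H m n), x = M.act y b}

/-- The degree-`n` part of `A_{≥1}·M`, for a left module. -/
def LMod.aug (M : LMod A) (n : ℤ) : AddSubgroup (M.M n) :=
  AddSubgroup.closure {x | ∃ m : ℤ, n < m ∧ ∃ (a : A.H n m) (y : M.M m), x = M.act a y}

/-- An element of a graded right module is torsion if it generates a right-bounded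
submodule. -/
def RMod.torsionEl (M : RMod A) {i : ℤ} (m : M.M i) : Prop :=
  ∃ N : ℤ, ∀ j : ℤ, N ≤ j → ∀ a : A.H i j, M.act m a = 0

/-- A torsion module. -/
def RMod.IsTorsion (M : RMod A) : Prop := ∀ (i : ℤ) (m : M.M i), M.torsionEl m

/-- The largest torsion submodule of `M`, in degree `i` (a `k`-submodule). -/
def RMod.torS (M : RMod A) (i : ℤ) : Submodule k (M.M i) where
  carrier := {m | M.torsionEl m}
  add_mem' := by
    rintro a b ⟨Na, hNa⟩ ⟨Nb, hNb⟩
    refine ⟨max Na Nb, fun j hj c => ?_⟩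
    rw [M.add_act, hNa j (le_trans (le_max_left _ _) hj) c,
      hNb j (le_trans (le_max_right _ _) hj) c, add_zero]
  zero_mem' := ⟨0, fun j _ a => M.zero_act a⟩
  smul_mem' := by
    rintro c x ⟨N, hN⟩
    exact ⟨N, fun j hj a => by rw [M.smul_act, hN j hj a, smul_zero]⟩

end ZPart

section Free

variable {k : Type} [Field k] {A : ZAlg k}

/-- The free graded right `A`-module on generators indexed by `σ`, where generator
`s` sits in degree `deg s` (i.e. `⊕_{s : σ} e_{deg s} A`). -/
def FreeR (A : ZAlg k) (σ : Type) (deg : σ → ℤ) : RMod A where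
  M n := Π₀ s : σ, A.H (deg s) n
  act x a := DFinsupp.mapRange (fun _ h => A.mul h a) (fun _ => A.zero_mul' a) x
  act_one x := by
    ext s
    simp [DFinsupp.mapRange_apply, A.mul_one]
  act_mul x a b := by
    ext s
    simp [DFinsupp.mapRange_apply, A.mul_assoc]
  add_act x y a := by
    ext s
    simp [DFinsupp.mapRange_apply, A.add_mul]
  act_add x a b := by
    ext s
    simp [DFinsupp.mapRange_apply, A.mul_add]
  smul_act c x a := by
    ext s
    simp [DFinsupp.mapRange_apply, A.smul_mul]
  act_smul c x a := by
    ext s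
    simp [DFinsupp.mapRange_apply, A.mul_smul]

/-- The right module `e_iA`. -/
def eA (A : ZAlg k) (i : ℤ) : RMod A where
  M n := A.H i n
  act m a := A.mul m a
  act_one m := A.mul_one m
  act_mul m a b := A.mul_assoc m a b
  add_act m n a := A.add_mul m n a
  act_add m a b := A.mul_add m a b
  smul_act c m a := A.smul_mul c m a
  act_smul c m a := A.mul_smul c m a

/-- Action of `A` on a basis element of a free module. -/
theorem FreeR_act_single {σ : Type} [DecidableEq σ] {deg : σ → ℤ} {i j : ℤ} (s : σ)
    (b : A.H (deg s) i) (a : A.H i j) :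
    (FreeR A σ deg).act (DFinsupp.single s b) a = DFinsupp.single s (A.mul b a) := by
  show DFinsupp.mapRange (fun _ h => A.mul h a) (fun _ => A.zero_mul' a)
      (DFinsupp.single s b) = DFinsupp.single s (A.mul b a)
  rw [DFinsupp.mapRange_single]

/-- The graded module homomorphism `⊕_{s} e_{deg s}A → M` determined by a family of
elements `g s ∈ M_{deg s}`. -/
noncomputable def freeHom {σ : Type} {deg : σ → ℤ} (M : RMod A) (g : ∀ s, M.M (deg s)) :
    RModHom (FreeR A σ deg) M :=
  letI : DecidableEq σ := Classical.decEq σ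
  { f := fun n x => DFinsupp.sumAddHom (fun s =>
    { toFun := fun a : A.H (deg s) n => M.act (g s) a
      map_zero' := M.act_zero _
      map_add' := fun a b => M.act_add _ a b }) x
    map_add := fun n x y => by exact map_add _ x y
    map_act := fun {i j} x a => by
      show DFinsupp.sumAddHom _ ((FreeR A σ deg).act x a)
        = M.act (DFinsupp.sumAddHom _ x) a
      induction x using DFinsupp.induction with
      | h0 =>
          erw [(FreeR A σ deg).zero_act, map_zero, map_zero, M.zero_act]
      | ha s b fx hfx hb ih =>
          erw [(FreeR A σ deg).add_act, map_add, map_add, M.add_act, ih]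
          congr 1
          rw [FreeR_act_single]
          simp only [DFinsupp.sumAddHom_single]
          exact (M.act_mul (g s) b a).symm }

end Free
section Quot

variable {k : Type} [Field k]

/-- Right multiplication by `a` as a `k`-linear map `A_{ip} → A_{iq}`. -/
def IAlg.mulRightLin (A : ZAlg k) {i p q : ℤ} (a : A.H p q) : A.H i p →ₗ[k] A.H i q where
  toFun x := A.mul x a
  map_add' x y := A.add_mul x y a
  map_smul' c x := A.smul_mul c x a

/-- Left multiplication by `a` as a `k`-linear map `А_{qj} → A_{pj}`. -/
def IAlg.mulLeftLin (A : ZAlg k) {p q j : ℤ} (a : A.H p q) : A.H q j →ₗ[k] A.H p j where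
  toFun x := A.mul a x
  map_add' x y := A.mul_add a x y
  map_smul' c x := A.mul_smul c a x

/-- The submodule `(e_iA)_{≥ t}` of `e_iA` in degree `p`. -/
def IAlg.tailSub (A : ZAlg k) (i t p : ℤ) : Submodule k (A.H i p) :=
  if t ≤ p then ⊤ else ⊥

/-- The quotient right module `e_iA/(e_iA)_{≥ t}`. -/
def eAquot (A : ZAlg k) (hA : A.posGraded) (i t : ℤ) : RMod A where
  M p := A.H i p ⧸ A.tailSub i t p
  act {p q} m a := Submodule.mapQ (A.tailSub i t p) (A.tailSub i t q) (A.mulRightLin a)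
    (by
      intro x hx
      simp only [IAlg.tailSub] at hx ⊢
      by_cases hpq : p ≤ q
      · split at hx
        · next h => simp [le_trans h hpq]
        · next h => simp_all [Submodule.mem_bot, IAlg.mulRightLin, A.zero_mul']
      · have : a = 0 := hA p q (by omega) a
        subst this
        simp only [IAlg.mulRightLin, Submodule.mem_comap, LinearMap.coe_mk, AddHom.coe_mk,
          A.mul_zero']
        split <;> simp) m
  act_one {p} m := by
    obtain ⟨x, rfl⟩ := Submodule.Quotient.mk_surjective _ m
    simp [Submodule.mapQ_apply, IAlg.mulRightLin, A.mul_one]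
  act_mul {p q r} m a b := by
    obtain ⟨x, rfl⟩ := Submodule.Quotient.mk_surjective _ m
    simp [Submodule.mapQ_apply, IAlg.mulRightLin, A.mul_assoc]
  add_act {p q} m n a := by
    obtain ⟨x, rfl⟩ := Submodule.Quotient.mk_surjective _ m
    obtain ⟨y, rfl⟩ := Submodule.Quotient.mk_surjective _ n
    simp [← Submodule.Quotient.mk_add, Submodule.mapQ_apply, IAlg.mulRightLin, A.add_mul]
  act_add {p q} m a b := by
    obtain ⟨x, rfl⟩ := Submodule.Quotient.mk_surjective _ m
    simp [Submodule.mapQ_apply, IAlg.mulRightLin, A.mul_add]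
  smul_act {p q} c m a := by
    obtain ⟨x, rfl⟩ := Submodule.Quotient.mk_surjective _ m
    simp [← Submodule.Quotient.mk_smul, Submodule.mapQ_apply, IAlg.mulRightLin, A.smul_mul]
  act_smul {p q} c m a := by
    obtain ⟨x, rfl⟩ := Submodule.Quotient.mk_surjective _ m
    simp [Submodule.mapQ_apply, IAlg.mulRightLin, A.mul_smul]

/-- The submodule `(Ae_j)_{≤ t}` of `Ae_j` in degree `p`. -/
def IAlg.headSub (A : ZAlg k) (j t p : ℤ) : Submodule k (A.H p j) :=
  if p ≤ t then ⊤ else ⊥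

/-- The quotient left module `Ae_j/(Ae_j)_{≤ t}`. -/
def lAquot (A : ZAlg k) (hA : A.posGraded) (j t : ℤ) : LMod A where
  M p := A.H p j ⧸ A.headSub j t p
  act {p q} a m := Submodule.mapQ (A.headSub j t q) (A.headSub j t p) (A.mulLeftLin a)
    (by
      intro x hx
      simp only [IAlg.headSub] at hx ⊢
      by_cases hpq : p ≤ q
      · split at hx
        · next h => simp [le_trans hpq h]
        · next h => simp_all [Submodule.mem_bot, IAlg.mulLeftLin, A.mul_zero']
      · have : a = 0 := hA p q (by omega) a
        subst this
        simp only [IAlg.mulLeftLin, Submodule.mem_comap, LinearMap.coe_mk, AddHom.coe_mk,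
          A.zero_mul']
        split <;> simp) m
  one_act {p} m := by
    obtain ⟨x, rfl⟩ := Submodule.Quotient.mk_surjective _ m
    simp [Submodule.mapQ_apply, IAlg.mulLeftLin, A.one_mul]
  mul_act {p q r} a b m := by
    obtain ⟨x, rfl⟩ := Submodule.Quotient.mk_surjective _ m
    simp [Submodule.mapQ_apply, IAlg.mulLeftLin, A.mul_assoc]
  act_add {p q} a m n := by
    obtain ⟨x, rfl⟩ := Submodule.Quotient.mk_surjective _ m
    obtain ⟨y, rfl⟩ := Submodule.Quotient.mk_surjective _ n
    simp [← Submodule.Quotient.mk_add, Submodule.mapQ_apply, IAlg.mulLeftLin, A.mul_add]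
  add_act {p q} a b m := by
    obtain ⟨x, rfl⟩ := Submodule.Quotient.mk_surjective _ m
    simp [Submodule.mapQ_apply, IAlg.mulLeftLin, A.add_mul]
  smul_act {p q} c a m := by
    obtain ⟨x, rfl⟩ := Submodule.Quotient.mk_surjective _ m
    simp [Submodule.mapQ_apply, IAlg.mulLeftLin, A.smul_mul]
  act_smul {p q} c a m := by
    obtain ⟨x, rfl⟩ := Submodule.Quotient.mk_surjective _ m
    simp [← Submodule.Quotient.mk_smul, Submodule.mapQ_apply, IAlg.mulLeftLin, A.mul_smul]

/-- The right module `e_iA_0 = e_iA/(e_iA)_{≥ i+1}`. -/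
def eA0 (A : ZAlg k) (hA : A.posGraded) (i : ℤ) : RMod A := eAquot A hA i (i+1)

/-- The left module `A_0e_j = Ae_j/(Ae_j)_{≤ j-1}`. -/
def A0e (A : ZAlg k) (hA : A.posGraded) (j : ℤ) : LMod A := lAquot A hA j (j-1)

end Quot

section Res

variable {k : Type} [Field k] {A : ZAlg k}

/-- Data of a complex of free graded right modules augmented to `M`:
`⋯ → F_1 → F_0 → M → 0`. -/
structure FreeResR (M : RMod A) where
  idx : ℕ → Type
  deg : ∀ n, idx n → ℤ
  d : ∀ n : ℕ, RModHom (FreeR A (idx (n+1)) (deg (n+1))) (FreeR A (idx n) (deg n))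
  aug : RModHom (FreeR A (idx 0) (deg 0)) M

namespace FreeResR

variable {M : RMod A} (R : FreeResR M)

/-- The `n`-th term of the resolution. -/
abbrev F (n : ℕ) : RMod A := FreeR A (R.idx n) (R.deg n)

/-- The resolution data is exact, i.e. a genuine free resolution of `M`. -/
def IsRes : Prop :=
  (∀ (j : ℤ), Function.Surjective (R.aug.f j)) ∧
  (∀ (j : ℤ) (x : (R.F 1).M j), R.aug.f j ((R.d 0).f j x) = 0) ∧
  (∀ (j : ℤ) (x : (R.F 0).M j), R.aug.f j x = 0 → ∃ y, (R.d 0).f j y = x) ∧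
  (∀ (n : ℕ) (j : ℤ) (x : (R.F (n+2)).M j), (R.d n).f j ((R.d (n+1)).f j x) = 0) ∧
  (∀ (n : ℕ) (j : ℤ) (x : (R.F (n+1)).M j),
    (R.d n).f j x = 0 → ∃ y, (R.d (n+1)).f j y = x)

/-- The resolution is minimal: `im ψ_n ⊆ F_{n-1}A_{≥1}`. -/
def IsMinimal : Prop :=
  ∀ (n : ℕ) (j : ℤ) (x : (R.F (n+1)).M j), (R.d n).f j x ∈ (R.F n).aug j

/-- The resolution has length `≤ n`. -/
def LenLE (n : ℕ) : Prop := ∀ m : ℕ, n < m → IsEmpty (R.idx m)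

/-- Each term of the resolution is a finitely generated free module. -/
def FinGen : Prop := ∀ n : ℕ, Finite (R.idx n)

/-- The homology, at homological degree `p+1`, of the complex obtained by applying
`- ⊗_A A_0` to the resolution, vanishes.  (Here `(F ⊗_A A_0)_j = F_j/(F A_{≥1})_j`.)
This says `Tor_{p+1}^A(M, A_0) = 0` as computed from `R`. -/
def TorSuccVanish (p : ℕ) : Prop :=
  ∀ (j : ℤ) (x : (R.F (p+1)).M j),
    (R.d p).f j x ∈ (R.F p).aug j →
    ∃ y : (R.F (p+2)).M j, x - (R.d (p+1)).f j y ∈ (R.F (p+1)).aug j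

end FreeResR

/-- `M` has projective dimension at most `n`: it admits a free resolution of
length at most `n`. -/
def RMod.pdLE (M : RMod A) (n : ℕ) : Prop :=
  ∃ R : FreeResR M, R.IsRes ∧ R.LenLE n

/-- The projective dimension of `M` in `Gr A`, as an extended natural number. -/
noncomputable def RMod.pdim (M : RMod A) : ℕ∞ :=
  sInf {e : ℕ∞ | ∃ n : ℕ, e = n ∧ M.pdLE n}

/-- `Tor_p^A(M, A_0) ≠ 0`, expressed via (any) free resolution of `M`. -/
def RMod.torNonzero (M : RMod A) : ℕ → Prop
  | 0 => ∃ (j : ℤ) (x : M.M j), x ∉ M.aug j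
  | (p+1) => ∃ R : FreeResR M, R.IsRes ∧ ∃ (j : ℤ) (x : (R.F (p+1)).M j),
      (R.d p).f j x ∈ (R.F p).aug j ∧
      ∀ y : (R.F (p+2)).M j, x - (R.d (p+1)).f j y ∉ (R.F (p+1)).aug j

/-- `A` is right Ext-finite: it is connected and each `e_iA/(e_iA)_{≥i+1}` has a
minimal free resolution all of whose terms are finitely generated. -/
def IAlg.rightExtFinite (A : ZAlg k) : Prop :=
  ∃ hA : A.connected, ∀ i : ℤ,
    ∃ R : FreeResR (eA0 A hA.1 i), R.IsRes ∧ R.IsMinimal ∧ R.FinGen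

end Res

section LRes

variable {k : Type} [Field k] {A : ZAlg k}

/-- The free graded left `A`-module on generators indexed by `σ` in degrees `deg`. -/
def FreeL (A : ZAlg k) (σ : Type) (deg : σ → ℤ) : LMod A where
  M n := Π₀ s : σ, A.H n (deg s)
  act a x := DFinsupp.mapRange (fun _ h => A.mul a h) (fun _ => A.mul_zero' a) x
  one_act x := by
    ext s
    simp [DFinsupp.mapRange_apply, A.one_mul]
  mul_act a b x := by
    ext s
    simp [DFinsupp.mapRange_apply, A.mul_assoc]
  act_add a x y := by
    ext s
    simp [DFinsupp.mapRange_apply, A.mul_add]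
  add_act a b x := by
    ext s
    simp [DFinsupp.mapRange_apply, A.add_mul]
  smul_act c a x := by
    ext s
    simp [DFinsupp.mapRange_apply, A.smul_mul]
  act_smul c a x := by
    ext s
    simp [DFinsupp.mapRange_apply, A.mul_smul]

/-- Data of a complex of free graded left modules augmented to `M`. -/
structure FreeResL (M : LMod A) where
  idx : ℕ → Type
  deg : ∀ n, idx n → ℤ
  d : ∀ n : ℕ, LModHom (FreeL A (idx (n+1)) (deg (n+1))) (FreeL A (idx n) (deg n))
  aug : LModHom (FreeL A (idx 0) (deg 0)) M

namespace FreeResL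

variable {M : LMod A} (R : FreeResL M)

abbrev F (n : ℕ) : LMod A := FreeL A (R.idx n) (R.deg n)

def IsRes : Prop :=
  (∀ (j : ℤ), Function.Surjective (R.aug.f j)) ∧
  (∀ (j : ℤ) (x : (R.F 1).M j), R.aug.f j ((R.d 0).f j x) = 0) ∧
  (∀ (j : ℤ) (x : (R.F 0).M j), R.aug.f j x = 0 → ∃ y, (R.d 0).f j y = x) ∧
  (∀ (n : ℕ) (j : ℤ) (x : (R.F (n+2)).M j), (R.d n).f j ((R.d (n+1)).f j x) = 0) ∧
  (∀ (n : ℕ) (j : ℤ) (x : (R.F (n+1)).M j),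
    (R.d n).f j x = 0 → ∃ y, (R.d (n+1)).f j y = x)

def IsMinimal : Prop :=
  ∀ (n : ℕ) (j : ℤ) (x : (R.F (n+1)).M j), (R.d n).f j x ∈ (R.F n).aug j

def LenLE (n : ℕ) : Prop := ∀ m : ℕ, n < m → IsEmpty (R.idx m)

def FinGen : Prop := ∀ n : ℕ, Finite (R.idx n)

end FreeResL

def LMod.pdLE (M : LMod A) (n : ℕ) : Prop :=
  ∃ R : FreeResL M, R.IsRes ∧ R.LenLE n

noncomputable def LMod.pdim (M : LMod A) : ℕ∞ :=
  sInf {e : ℕ∞ | ∃ n : ℕ, e = n ∧ M.pdLE n}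

/-- `A` is left Ext-finite. -/
def IAlg.leftExtFinite (A : ZAlg k) : Prop :=
  ∃ hA : A.connected, ∀ i : ℤ,
    ∃ R : FreeResL (A0e A hA.1 i), R.IsRes ∧ R.IsMinimal ∧ R.FinGen

/-- `A` is Ext-finite. -/
def IAlg.extFinite (A : ZAlg k) : Prop := A.rightExtFinite ∧ A.leftExtFinite

end LRes
section HomGroup

variable {k : Type} [Field k] {ι' : Type}

namespace RMod
variable {B : IAlg k ι'} (M : RMod B)

theorem nsmul_act {i j : ι'} (n : ℕ) (m : M.M i) (a : B.H i j) :
    M.act (n • m) a = n • M.act m a := by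
  induction n with
  | zero => simp [M.zero_act]
  | succ p ih => rw [succ_nsmul, M.add_act, ih, succ_nsmul]

theorem zsmul_act {i j : ι'} (n : ℤ) (m : M.M i) (a : B.H i j) :
    M.act (n • m) a = n • M.act m a := by
  cases n with
  | ofNat p => simpa using M.nsmul_act p m a
  | negSucc p =>
      simp only [negSucc_zsmul]
      rw [M.neg_act, M.nsmul_act]

end RMod

namespace RModHom

variable {B : IAlg k ι'} {M N : RMod B}

instance : Add (RModHom M N) :=
  ⟨fun f g =>
    ⟨fun i x => f.f i x + g.f i x,
     fun i x y => by simp only [f.map_add, g.map_add]; abel,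
     fun x a => by simp only [f.map_act, g.map_act, N.add_act]⟩⟩

instance : Zero (RModHom M N) :=
  ⟨⟨fun _ _ => 0, fun _ _ _ => by simp only [add_zero], fun _ a => by simp only [N.zero_act]⟩⟩

instance : Neg (RModHom M N) :=
  ⟨fun f => ⟨fun i x => -(f.f i x),
    fun i x y => by simp only [f.map_add]; abel,
    fun x a => by simp only [f.map_act, N.neg_act]⟩⟩

instance : Sub (RModHom M N) :=
  ⟨fun f g => ⟨fun i x => f.f i x - g.f i x,
    fun i x y => by simp only [f.map_add, g.map_add]; abel,
    fun x a => by simp only [f.map_act, g.map_act, sub_eq_add_neg, N.add_act,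
      N.neg_act]⟩⟩

instance : SMul ℕ (RModHom M N) :=
  ⟨fun n f => ⟨fun i x => n • f.f i x,
    fun i x y => by simp only [f.map_add, smul_add],
    fun x a => by simp only [f.map_act, N.nsmul_act]⟩⟩

instance : SMul ℤ (RModHom M N) :=
  ⟨fun n f => ⟨fun i x => n • f.f i x,
    fun i x y => by simp only [f.map_add, smul_add],
    fun x a => by simp only [f.map_act, N.zsmul_act]⟩⟩

instance : SMul k (RModHom M N) :=
  ⟨fun c f => ⟨fun i x => c • f.f i x,
    fun i x y => by simp only [f.map_add, smul_add],
    fun x a => by simp only [f.map_act, N.smul_act]⟩⟩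

theorem toFun_injective :
    Function.Injective (fun (f : RModHom M N) => f.f) := by
  intro f g h
  ext i x
  exact congrFun (congrFun h i) x

instance : AddCommGroup (RModHom M N) :=
  toFun_injective.addCommGroup (fun f => f.f) rfl (fun _ _ => rfl) (fun _ => rfl)
    (fun _ _ => rfl) (fun _ _ => rfl) (fun _ _ => rfl)

instance : Module k (RModHom M N) :=
  toFun_injective.module k
    { toFun := fun (f : RModHom M N) => f.f
      map_zero' := rfl
      map_add' := fun _ _ => rfl } (fun _ _ => rfl)

@[simp] theorem add_apply (f g : RModHom M N) (i : ι') (x : M.M i) :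
    (f + g).f i x = f.f i x + g.f i x := rfl

@[simp] theorem zero_apply (i : ι') (x : M.M i) : (0 : RModHom M N).f i x = 0 := rfl

@[simp] theorem smul_apply (c : k) (f : RModHom M N) (i : ι') (x : M.M i) :
    (c • f).f i x = c • f.f i x := rfl

end RModHom

end HomGroup
section Tau

variable {k : Type} [Field k] {A : ZAlg k}

/-- The torsion submodule `τ(M)` of a graded right module, as a graded right module. -/
def RMod.tau (M : RMod A) : RMod A where
  M i := ↥(M.torS i)
  act {i j} m a := ⟨M.act m.1 a, by
    obtain ⟨N, hN⟩ := m.2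
    exact ⟨N, fun p hp b => by rw [M.act_mul, hN p hp]⟩⟩
  act_one m := by
    ext
    exact M.act_one m.1
  act_mul m a b := by
    ext
    exact M.act_mul m.1 a b
  add_act m n a := by
    ext
    exact M.add_act m.1 n.1 a
  act_add m a b := by
    ext
    exact M.act_add m.1 a b
  smul_act c m a := by
    ext
    exact M.smul_act c m.1 a
  act_smul c m a := by
    ext
    exact M.act_smul c m.1 a

/-- The restriction of a module homomorphism to torsion submodules. -/
def RModHom.tau {M N : RMod A} (f : RModHom M N) : RModHom M.tau N.tau where
  f i m := ⟨f.f i m.1, by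
    obtain ⟨B, hB⟩ := m.2
    exact ⟨B, fun p hp b => by rw [← f.map_act, hB p hp, f.map_zero]⟩⟩
  map_add i x y := Subtype.ext (f.map_add i x.1 y.1)
  map_act x a := Subtype.ext (f.map_act x.1 a)

/-- An injective resolution `0 → M → J^0 → J^1 → ⋯` of a graded right module. -/
structure InjRes (M : RMod A) where
  J : ℕ → RMod A
  eta : RModHom M (J 0)
  d : ∀ n : ℕ, RModHom (J n) (J (n+1))

namespace InjRes

variable {M : RMod A} (E : InjRes M)

/-- Each term of the resolution is an injective object of `Gr A`. -/
def AllInj : Prop := ∀ n, CategoryTheory.Injective (E.J n)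

/-- The resolution is exact. -/
def IsRes : Prop :=
  (∀ i : ℤ, Function.Injective (E.eta.f i)) ∧
  (∀ (i : ℤ) (x : M.M i), (E.d 0).f i (E.eta.f i x) = 0) ∧
  (∀ (i : ℤ) (x : (E.J 0).M i), (E.d 0).f i x = 0 → ∃ y, E.eta.f i y = x) ∧
  (∀ (n : ℕ) (i : ℤ) (x : (E.J n).M i), (E.d (n+1)).f i ((E.d n).f i x) = 0) ∧
  (∀ (n : ℕ) (i : ℤ) (x : (E.J (n+1)).M i),
    (E.d (n+1)).f i x = 0 → ∃ y, (E.d n).f i y = x)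

/-- The homology of the complex `τ(J^•)` vanishes at cohomological degree `n+1`
and internal degree `i`:  every cocycle in `τ(J^{n+1})_i` is a boundary. -/
def TauHVanish (n : ℕ) (i : ℤ) : Prop :=
  ∀ x : (E.J (n+1)).tau.M i,
    ((E.d (n+1)).tau).f i x = 0 → ∃ y : (E.J n).tau.M i, ((E.d n).tau).f i y = x

end InjRes

/-- A morphism of injective resolutions lifting a module homomorphism. -/
structure ResMap {M N : RMod A} (φ : RModHom M N) (E : InjRes M) (F : InjRes N) where
  maps : ∀ n : ℕ, RModHom (E.J n) (F.J n)
  comm0 : ∀ (i : ℤ) (x : M.M i), (maps 0).f i (E.eta.f i x) = F.eta.f i (φ.f i x)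
  comm : ∀ (n : ℕ) (i : ℤ) (x : (E.J n).M i),
    (maps (n+1)).f i ((E.d n).f i x) = (F.d n).f i ((maps n).f i x)

end Tau

section Ext

variable {k : Type} [Field k] {A : ZAlg k}

namespace FreeResR

variable {X : RMod A} (R : FreeResR X) (Y : RMod A)

/-- Cocycles of the complex `Hom(F_•, Y)` in cohomological degree `q`. -/
def extCoc (q : ℕ) : AddSubgroup (RModHom (R.F q) Y) where
  carrier := {f | ∀ (j : ℤ) (x : (R.F (q+1)).M j), f.f j ((R.d q).f j x) = 0}
  add_mem' := by
    intro f g hf hg j x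
    show f.f j _ + g.f j _ = 0
    rw [hf j x, hg j x, add_zero]
  zero_mem' := fun j x => rfl
  neg_mem' := by
    intro f hf j x
    show -(f.f j _) = 0
    rw [hf j x, neg_zero]

/-- `Ext^q_{Gr A}(X, Y)` computed from the free resolution `R`:  cocycles in
cohomological degree `q`, modulo boundaries when `q ≥ 1`. -/
def extH : ℕ → Type
  | 0 => ↥(R.extCoc Y 0)
  | (q+1) => ↥(R.extCoc Y (q+1)) ⧸
      ((AddSubgroup.closure {f : RModHom (R.F (q+1)) Y |
        ∃ g : RModHom (R.F q) Y, f = g.comp (R.d q)}).addSubgroupOf (R.extCoc Y (q+1)))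

/-- `Ext^q(X, Y)` computed from `R` vanishes. -/
def extVanish (q : ℕ) : Prop :=
  match q with
  | 0 => ∀ f : RModHom (R.F 0) Y,
      (∀ (j : ℤ) (x : (R.F 1).M j), f.f j ((R.d 0).f j x) = 0) →
      ∀ (j : ℤ) (x : (R.F 0).M j), f.f j x = 0
  | (q+1) => ∀ f : RModHom (R.F (q+1)) Y,
      (∀ (j : ℤ) (x : (R.F (q+2)).M j), f.f j ((R.d (q+1)).f j x) = 0) →
      ∃ g : RModHom (R.F q) Y, ∀ (j : ℤ) (x : (R.F (q+1)).M j),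
        f.f j x = g.f j ((R.d q).f j x)

end FreeResR

end Ext

section TildeOp

variable {k : Type} [Field k]

/-- The positively graded opposite `Ã^op` of a `ℤ`-algebra:
`(Ã^op)_{ij} = A_{-j,-i}` with `f·g := gf`. -/
def tildeOp (A : ZAlg k) : ZAlg k where
  H i j := A.H (-j) (-i)
  mul {i j l} f g := A.mul g f
  one i := A.one (-i)
  mul_assoc a b c := (A.mul_assoc c b a).symm
  one_mul a := A.mul_one a
  mul_one a := A.one_mul a
  add_mul a b c := A.mul_add c a b
  mul_add a b c := A.add_mul b c a
  smul_mul c a b := A.mul_smul c b a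
  mul_smul c a b := A.smul_mul c b a

end TildeOp

section SerreAux

variable {k : Type} [Field k] {A : ZAlg k}

theorem RModHom.map_neg' {M N : RMod A} (f : RModHom M N) {i : ℤ} (x : M.M i) :
    f.f i (-x) = -(f.f i x) := by
  have h := f.map_add i x (-x)
  rw [add_neg_cancel, f.map_zero] at h
  exact (eq_neg_of_add_eq_zero_right h.symm)

/-- A module homomorphism maps the augmentation submodule into the augmentation
submodule. -/
theorem RModHom.map_aug {M N : RMod A} (f : RModHom M N) {j : ℤ} {x : M.M j}
    (hx : x ∈ M.aug j) : f.f j x ∈ N.aug j := by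
  induction hx using AddSubgroup.closure_induction with
  | mem x hx =>
      obtain ⟨m, hm, y, b, rfl⟩ := hx
      rw [f.map_act]
      exact AddSubgroup.subset_closure ⟨m, hm, f.f m y, b, rfl⟩
  | zero => rw [f.map_zero]; exact zero_mem _
  | add x y _ _ hx hy => rw [f.map_add]; exact add_mem hx hy
  | neg x _ hx => rw [f.map_neg']; exact neg_mem hx

/-- The augmentation submodule of `e_iA` vanishes in degrees `≤ i` when `A` is
positively graded. -/
theorem eA_aug_eq_zero (hp : A.posGraded) (i j : ℤ) (hj : j ≤ i) {x : A.H i j}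
    (hx : x ∈ (eA A i).aug j) : x = 0 := by
  have hle : (eA A i).aug j ≤ ⊥ := by
    apply (AddSubgroup.closure_le _).mpr
    rintro x ⟨m, hm, y, b, rfl⟩
    have hy : y = 0 := hp i m (by omega) y
    subst hy
    simp [(eA A i).zero_act b]
  exact (AddSubgroup.mem_bot).mp (hle hx)

/-- The tail `(e_iA)_{≥ n}` is generated by finitely many elements in degrees `≥ n`
(as an abelian group, allowing right multiplications by `A`). -/
def FGTail (A : ZAlg k) (i n : ℤ) : Prop :=
  ∃ (T : Type) (_ : Finite T) (d : T → ℤ) (b : ∀ t, A.H i (d t)),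
    (∀ t, n ≤ d t ∨ b t = 0) ∧
    ∀ j, n ≤ j → ∀ a : A.H i j,
      a ∈ AddSubgroup.closure {x : A.H i j | ∃ t, ∃ u : A.H (d t) j, x = A.mul (b t) u}

/-- Base case: `(e_iA)_{≥ i+1}` is finitely generated, via the minimal finite free
resolution of `e_iA_0`. -/
theorem FGTail_base (hp : A.posGraded) (i : ℤ)
    (R : FreeResR (eA0 A hp i)) (hres : R.IsRes) (hmin : R.IsMinimal) (hfin : R.FinGen) :
    FGTail A i (i+1) := by
  classical
  -- choose lifts of the images of the degree-0 generators
  have hc0 : ∀ s : R.idx 0, ∃ cs : A.H i (R.deg 0 s),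
      (Submodule.Quotient.mk cs : (eA0 A hp i).M (R.deg 0 s)) =
        R.aug.f (R.deg 0 s) (DFinsupp.single s (A.one (R.deg 0 s))) := fun s =>
    Submodule.Quotient.mk_surjective _ _
  choose c hcs using hc0
  -- the retraction ψ : F₀ → e_iA
  set ψ : RModHom (R.F 0) (eA A i) := freeHom (eA A i) c with hψdef
  have hψs : ∀ (j : ℤ) (s : R.idx 0) (u : A.H (R.deg 0 s) j),
      ψ.f j (DFinsupp.single s u) = A.mul (c s) u := by
    intro j s u
    rw [hψdef]
    exact DFinsupp.sumAddHom_single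
      (fun s => ({ toFun := fun a : A.H (R.deg 0 s) j => (eA A i).act (c s) a
                   map_zero' := (eA A i).act_zero _
                   map_add' := fun a b => (eA A i).act_add _ a b } :
        A.H (R.deg 0 s) j →+ A.H i j)) s u
  -- π ∘ ψ = aug
  have hπψ : ∀ (j : ℤ) (x : (R.F 0).M j),
      (Submodule.Quotient.mk (ψ.f j x) : (eA0 A hp i).M j) = R.aug.f j x := by
    intro j x
    induction x using DFinsupp.induction with
    | h0 => erw [ψ.map_zero, R.aug.map_zero, Submodule.Quotient.mk_zero]; rfl
    | ha s u x _ _ ih =>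
        erw [ψ.map_add, R.aug.map_add, Submodule.Quotient.mk_add, ih]
        congr 1
        have hs : (DFinsupp.single s u : (R.F 0).M j) =
            (R.F 0).act (DFinsupp.single s (A.one (R.deg 0 s))) u := by
          rw [FreeR_act_single, A.one_mul]
        erw [hs, ψ.map_act, R.aug.map_act, ← hcs s]
        have hone : ψ.f (R.deg 0 s) (DFinsupp.single s (A.one (R.deg 0 s))) = c s := by
          rw [hψs, A.mul_one]
        rw [hone]
        exact (Submodule.mapQ_apply (A.tailSub i (i+1) (R.deg 0 s))
          (A.tailSub i (i+1) j) (A.mulRightLin u) (c s)).symm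
  refine ⟨R.idx 1, hfin 1, R.deg 1,
    fun t => ψ.f _ ((R.d 0).f _ (DFinsupp.single t (A.one (R.deg 1 t)))), ?_, ?_⟩
  · -- degree condition on the generators
    intro t
    rcases le_or_gt (i+1) (R.deg 1 t) with h | h
    · exact Or.inl h
    · refine Or.inr ?_
      have hm := hmin 0 (R.deg 1 t) (DFinsupp.single t (A.one (R.deg 1 t)))
      exact eA_aug_eq_zero hp i _ (by omega) (ψ.map_aug hm)
  · intro j hj a
    obtain ⟨x₀, hx₀⟩ := hres.1 i (Submodule.Quotient.mk (A.one i))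
    -- aug (x₀ · a) = 0
    have haugz : R.aug.f j ((R.F 0).act x₀ a) = 0 := by
      rw [R.aug.map_act x₀ a, hx₀]
      have h1 : (eA0 A hp i).act (Submodule.Quotient.mk (A.one i)) a =
          Submodule.Quotient.mk (A.mul (A.one i) a) := Submodule.mapQ_apply _ _ _ _
      rw [h1, A.one_mul]
      exact (Submodule.Quotient.mk_eq_zero _).mpr (by simp [IAlg.tailSub, hj])
    obtain ⟨y, hy⟩ := hres.2.2.1 j ((R.F 0).act x₀ a) haugz
    -- ψ x₀ = 1
    have hψx₀ : ψ.f i x₀ = A.one i := by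
      have h2 : (Submodule.Quotient.mk (ψ.f i x₀) : (eA0 A hp i).M i) =
          Submodule.Quotient.mk (A.one i) := (hπψ i x₀).trans hx₀
      have h3 := (Submodule.Quotient.eq _).mp h2
      have h4 : A.tailSub i (i+1) i = ⊥ := by
        rw [IAlg.tailSub, if_neg (by omega)]
      rw [h4] at h3
      exact sub_eq_zero.mp ((Submodule.mem_bot k).mp h3)
    have ha2 : a = ψ.f j ((R.d 0).f j y) := by
      rw [hy, ψ.map_act x₀ a, hψx₀]
      exact (A.one_mul a).symm
    rw [ha2]
    -- ψ (d₀ y) lies in the subgroup generated by the b_t's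
    clear ha2 hy haugz
    induction y using DFinsupp.induction with
    | h0 => erw [(R.d 0).map_zero, ψ.map_zero]; exact zero_mem _
    | ha t u y _ _ ih =>
        erw [(R.d 0).map_add, ψ.map_add]
        refine add_mem ?_ ih
        have hs : (DFinsupp.single t u : (R.F 1).M j) =
            (R.F 1).act (DFinsupp.single t (A.one (R.deg 1 t))) u := by
          rw [FreeR_act_single, A.one_mul]
        erw [hs, (R.d 0).map_act, ψ.map_act]
        exact AddSubgroup.subset_closure ⟨t, u, rfl⟩

/-- Inductive step: if all base tails are finitely generated and `(e_iA)_{≥n}` is,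
then so is `(e_iA)_{≥ n+1}`. -/
theorem FGTail_step (hbase : ∀ l : ℤ, FGTail A l (l+1)) (i n : ℤ)
    (h : FGTail A i n) : FGTail A i (n+1) := by
  classical
  obtain ⟨T, fT, d, b, hdeg, hgen⟩ := h
  choose T₂ fin₂ e₂ c₂ hd₂ hg₂ using hbase
  haveI := fT
  haveI : ∀ t : T, Finite (T₂ (d t)) := fun t => fin₂ (d t)
  let T' := T ⊕ (Σ t : T, T₂ (d t))
  let d' : T' → ℤ := fun t' => match t' with
    | .inl t => d t
    | .inr p => e₂ (d p.1) p.2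
  let b' : ∀ t', A.H i (d' t') := fun t' => match t' with
    | .inl t => if n+1 ≤ d t then b t else 0
    | .inr p => A.mul (b p.1) (c₂ (d p.1) p.2)
  refine ⟨T', inferInstance, d', b', ?_, ?_⟩
  · rintro (t | ⟨t, v⟩)
    · show n+1 ≤ d t ∨ (if n+1 ≤ d t then b t else 0) = 0
      by_cases hc : n+1 ≤ d t
      · exact Or.inl hc
      · exact Or.inr (if_neg hc)
    · show n+1 ≤ e₂ (d t) v ∨ A.mul (b t) (c₂ (d t) v) = 0
      rcases hdeg t with h1 | h1
      · rcases hd₂ (d t) v with h2 | h2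
        · exact Or.inl (by omega)
        · exact Or.inr (by rw [h2, A.mul_zero'])
      · exact Or.inr (by rw [h1, A.zero_mul'])
  · intro j hj a
    have ha := hgen j (by omega) a
    refine (AddSubgroup.closure_le _).mpr ?_ ha
    rintro x ⟨t, u, rfl⟩
    simp only [SetLike.mem_coe]
    rcases le_or_gt (n+1) (d t) with hdt | hdt
    · refine AddSubgroup.subset_closure ⟨Sum.inl t, u, ?_⟩
      show A.mul (b t) u = A.mul (if n+1 ≤ d t then b t else 0) u
      rw [if_pos hdt]
    · -- d t ≤ n, so u lies in the tail of e_{d t}A and we rewrite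
      rcases hdeg t with h1 | h1
      · have hu := hg₂ (d t) j (by omega) u
        -- multiply the closure membership by b t on the left
        set L : A.H (d t) j →+ A.H i j :=
          AddMonoidHom.mk' (fun u => A.mul (b t) u) (A.mul_add (b t)) with hL
        have key : ∀ u' ∈ AddSubgroup.closure
            {x : A.H (d t) j | ∃ v, ∃ w : A.H (e₂ (d t) v) j, x = A.mul (c₂ (d t) v) w},
            L u' ∈ AddSubgroup.closure
              {x : A.H i j | ∃ t', ∃ w : A.H (d' t') j, x = A.mul (b' t') w} := by
          intro u' hu'
          induction hu' using AddSubgroup.closure_induction with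
          | mem x hx =>
              obtain ⟨v, w, rfl⟩ := hx
              refine AddSubgroup.subset_closure ⟨Sum.inr ⟨t, v⟩, w, ?_⟩
              show A.mul (b t) (A.mul (c₂ (d t) v) w)
                = A.mul (A.mul (b t) (c₂ (d t) v)) w
              rw [← A.mul_assoc]
          | zero => rw [map_zero]; exact zero_mem _
          | add x y _ _ hx hy => rw [map_add]; exact add_mem hx hy
          | neg x _ hx => rw [map_neg]; exact neg_mem hx
        exact key u hu
      · rw [h1, A.zero_mul']
        exact zero_mem _

/-- All tails `(e_iA)_{≥ n}` (for `n ≥ i+1`) are finitely generated. -/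
theorem FGTail_all (hbase : ∀ l : ℤ, FGTail A l (l+1)) (i n : ℤ) (hn : i+1 ≤ n) :
    FGTail A i n := by
  have key : ∀ m : ℕ, FGTail A i (i+1+m) := by
    intro m
    induction m with
    | zero => simpa using hbase i
    | succ p ih =>
        have h := FGTail_step hbase i (i+1+p) ih
        have he : (i+1+(p:ℤ))+1 = i+1+((p+1 : ℕ) : ℤ) := by push_cast; ring
        rwa [he] at h
  have h := key (n - (i+1)).toNat
  rwa [show i+1+((n-(i+1)).toNat : ℤ) = n by omega] at h

end SerreAux

/-- For a right Ext-finite connected `ℤ`-algebra `A`, the torsion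
modules form a Serre subcategory of `Gr A`: closed under subobjects, quotients and
extensions. -/
theorem torsion_is_serre_subcategory {k : Type} [Field k] (A : ZAlg k)
    (hA : A.rightExtFinite) :
    (∀ (M N : RMod A) (f : RModHom M N), (∀ i, Function.Injective (f.f i)) →
      N.IsTorsion → M.IsTorsion) ∧
    (∀ (M N : RMod A) (f : RModHom M N), (∀ i, Function.Surjective (f.f i)) →
      M.IsTorsion → N.IsTorsion) ∧
    (∀ (M N P : RMod A) (f : RModHom M N) (g : RModHom N P),
      (∀ i, Function.Injective (f.f i)) → (∀ i, Function.Surjective (g.f i)) →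
      (∀ (i : ℤ) (x : N.M i), g.f i x = 0 ↔ ∃ y, f.f i y = x) →
      M.IsTorsion → P.IsTorsion → N.IsTorsion) := by
  obtain ⟨hc, hres⟩ := hA
  have hbase : ∀ l : ℤ, FGTail A l (l+1) := by
    intro l
    obtain ⟨R, h1, h2, h3⟩ := hres l
    exact FGTail_base hc.1 l R h1 h2 h3
  refine ⟨?_, ?_, ?_⟩
  · -- closed under subobjects
    intro M N f hinj hN i m
    obtain ⟨B, hB⟩ := hN i (f.f i m)
    refine ⟨B, fun j hj a => hinj j ?_⟩
    rw [f.map_act, hB j hj a, f.map_zero]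
  · -- closed under quotients
    intro M N f hsurj hM i n
    obtain ⟨m, rfl⟩ := hsurj i n
    obtain ⟨B, hB⟩ := hM i m
    exact ⟨B, fun j hj a => by rw [← f.map_act, hB j hj a, f.map_zero]⟩
  · -- closed under extensions
    intro M N P f g hinj hsurj hker hM hP i x
    obtain ⟨N₀, hN₀⟩ := hP i (g.f i x)
    set n₀ : ℤ := max N₀ (i+1) with hn₀
    obtain ⟨T, fT, d, b, hdeg, hgen⟩ := FGTail_all hbase i n₀ (le_max_right _ _)
    haveI := fT
    -- each x · b t lifts to M
    have hy : ∀ t, ∃ y : M.M (d t), f.f (d t) y = N.act x (b t) := by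
      intro t
      rcases hdeg t with h | h
      · have hz : g.f (d t) (N.act x (b t)) = 0 := by
          rw [g.map_act]
          exact hN₀ (d t) (le_trans (le_max_left _ _) h) (b t)
        exact (hker (d t) _).mp hz
      · exact ⟨0, by rw [f.map_zero, h, N.act_zero]⟩
    choose y hyy using hy
    choose B hB using fun t => hM (d t) (y t)
    obtain ⟨N₁, hN₁⟩ := Finite.exists_le B
    refine ⟨max N₁ n₀, fun j hj a => ?_⟩
    have ha := hgen j (le_trans (le_max_right _ _) hj) a
    set L : A.H i j →+ N.M j := AddMonoidHom.mk' (fun a => N.act x a) (N.act_add x) with hL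
    have hker' : AddSubgroup.closure
        {z : A.H i j | ∃ t, ∃ u : A.H (d t) j, z = A.mul (b t) u} ≤ L.ker := by
      apply (AddSubgroup.closure_le _).mpr
      rintro z ⟨t, u, rfl⟩
      simp only [SetLike.mem_coe, AddMonoidHom.mem_ker]
      show N.act x (A.mul (b t) u) = 0
      rw [← N.act_mul, ← hyy t, ← f.map_act,
        hB t j (le_trans (hN₁ t) (le_trans (le_max_left _ _) hj)) u, f.map_zero]
    exact AddMonoidHom.mem_ker.mp (hker' ha)
end

section
/- (Nakayama's Lemma for connected Z-algebras) Let A be a connected Z-algebra and M a left-bounded graded right A-module. If M ⊗_A A_0 = 0 then M = 0. Consequently, if N is left-bounded and f : M → N is a morphism in Gr A such that f ⊗_A A_0 is surjective, then f is surjective. -/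
variable {k : Type} [Field k] {ι : Type}

/-- **Nakayama's Lemma.** Let `A` be a connected `ℤ`-algebra.  If `M`
is left-bounded and `M ⊗_A A_0 = 0` (i.e. `M_n = (M·A_{≥1})_n` for all `n`), then
`M = 0`.  Consequently, if `N` is left-bounded and `f : M → N` induces a surjection
`M ⊗_A A_0 → N ⊗_A A_0`, then `f` is surjective. -/
theorem nakayama_for_connected_Z_algebras {k : Type} [Field k] (A : ZAlg k)
    (hA : A.connected) :
    (∀ (M : RMod A) (d : ℤ), M.leftBddBy d → (∀ (n : ℤ) (x : M.M n), x ∈ M.aug n) →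
      ∀ (n : ℤ) (x : M.M n), x = 0) ∧
    (∀ (M N : RMod A) (d : ℤ), N.leftBddBy d → ∀ f : RModHom M N,
      (∀ (n : ℤ) (y : N.M n), ∃ x : M.M n, y - f.f n x ∈ N.aug n) →
      ∀ n : ℤ, Function.Surjective (f.f n)) := by
  constructor
  · intro M d hbd hgen
    have key : ∀ K : ℕ, ∀ n : ℤ, n < d + K → ∀ x : M.M n, x = 0 := by
      intro K
      induction K with
      | zero => intro n hn x; exact hbd n (by omega) x
      | succ K ih =>
        intro n hn x
        by_cases h : n < d + K
        · exact ih n h x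
        · have hx := hgen n x
          have hle : M.aug n ≤ ⊥ := by
            apply (AddSubgroup.closure_le _).mpr
            rintro z ⟨m, hm, y, b, rfl⟩
            have hy : y = 0 := ih m (by omega) y
            simp [hy, M.zero_act]
          simpa using hle hx
    intro n x
    exact key ((n - d).toNat + 1) n (by omega) x
  · intro M N d hbd f hsur
    have key : ∀ K : ℕ, ∀ n : ℤ, n < d + K → ∀ y : N.M n, ∃ x, f.f n x = y := by
      intro K
      induction K with
      | zero =>
        intro n hn y
        exact ⟨0, by rw [f.map_zero, hbd n (by omega) y]⟩
      | succ K ih =>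
        intro n hn y
        by_cases h : n < d + K
        · exact ih n h y
        · obtain ⟨x₀, hx₀⟩ := hsur n y
          have hle : N.aug n ≤ (AddMonoidHom.mk' (f.f n) (f.map_add n)).range := by
            apply (AddSubgroup.closure_le _).mpr
            rintro z ⟨m, hm, y', b, rfl⟩
            obtain ⟨x', hx'⟩ := ih m (by omega) y'
            exact ⟨M.act x' b, by simp [AddMonoidHom.mk'_apply, f.map_act, hx']⟩
          obtain ⟨x₁, hx₁⟩ := hle hx₀
          refine ⟨x₀ + x₁, ?_⟩
          rw [f.map_add]
          simp only [AddMonoidHom.mk'_apply] at hx₁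
          rw [hx₁]
          abel
    intro n y
    exact key ((n - d).toNat + 1) n (by omega) y
end

section
/- Let A be a connected Z-algebra with sup{ pd(A_0e_j) : j ∈ Z } = n < ∞. Then every left-bounded graded right A-module N satisfies pd N ≤ n. -/
variable {k : Type} [Field k] {ι : Type}

section Helpers

variable {k : Type} [Field k] {A : ZAlg k}

namespace RMod

theorem act_neg (M : RMod A) {i j : ℤ} (m : M.M i) (a : A.H i j) :
    M.act m (-a) = - M.act m a := by
  have h := M.act_add m a (-a)
  rw [add_neg_cancel, M.act_zero] at h
  exact (eq_neg_of_add_eq_zero_right h.symm)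

theorem act_sub (M : RMod A) {i j : ℤ} (m : M.M i) (a b : A.H i j) :
    M.act m (a - b) = M.act m a - M.act m b := by
  rw [sub_eq_add_neg, M.act_add, M.act_neg, sub_eq_add_neg]

theorem act_mem_aug (M : RMod A) {m j : ℤ} (h : m < j) (y : M.M m) (b : A.H m j) :
    M.act y b ∈ M.aug j :=
  AddSubgroup.subset_closure ⟨m, h, y, b, rfl⟩

/-- Push an additive map through `M.aug`. -/
theorem aug_map_mem (M : RMod A) {j : ℤ} {H : Type} [AddCommGroup H] (g : M.M j →+ H)
    (P : AddSubgroup H)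
    (hgen : ∀ (m : ℤ), m < j → ∀ (y : M.M m) (b : A.H m j), g (M.act y b) ∈ P)
    {x : M.M j} (hx : x ∈ M.aug j) : g x ∈ P := by
  induction hx using AddSubgroup.closure_induction with
  | mem x hx => obtain ⟨m, hm, y, b, rfl⟩ := hx; exact hgen m hm y b
  | zero => rw [map_zero]; exact P.zero_mem
  | add x y _ _ hx hy => rw [map_add]; exact P.add_mem hx hy
  | neg x _ hx => rw [map_neg]; exact P.neg_mem hx

theorem aug_act_mem (M : RMod A) {j l : ℤ} (hjl : j ≤ l) {x : M.M j} (hx : x ∈ M.aug j)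
    (b : A.H j l) : M.act x b ∈ M.aug l := by
  refine M.aug_map_mem (AddMonoidHom.mk' (fun v => M.act v b) (fun v w => M.add_act v w b))
    (M.aug l) (fun m hm y c => ?_) hx
  simp only [AddMonoidHom.mk'_apply]
  rw [M.act_mul]
  exact M.act_mem_aug (lt_of_lt_of_le hm hjl) y _

end RMod

namespace RModHom

variable {M N : RMod A} (f : RModHom M N)

theorem map_neg'_s10 {i : ℤ} (x : M.M i) : f.f i (-x) = - f.f i x := by
  have h := f.map_add i x (-x)
  rw [add_neg_cancel, f.map_zero] at h
  exact (eq_neg_of_add_eq_zero_right h.symm)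

theorem map_sub' {i : ℤ} (x y : M.M i) : f.f i (x - y) = f.f i x - f.f i y := by
  rw [sub_eq_add_neg, f.map_add, f.map_neg'_s10, sub_eq_add_neg]

/-- `f.f j` as a bundled additive homomorphism. -/
def addHom (j : ℤ) : M.M j →+ N.M j := AddMonoidHom.mk' (f.f j) (f.map_add j)

@[simp] theorem addHom_apply (j : ℤ) (x : M.M j) : f.addHom j x = f.f j x := rfl

theorem map_aug_s10 {j : ℤ} {x : M.M j} (hx : x ∈ M.aug j) : f.f j x ∈ N.aug j := by
  have := M.aug_map_mem (f.addHom j) (N.aug j) (fun m hm y b => ?_) hx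
  · exact this
  · simp only [addHom_apply]
    rw [f.map_act]
    exact N.act_mem_aug hm _ b

end RModHom

/-- Components of elements of `aug` of a free module vanish in top degree. -/
theorem freeR_aug_comp (hpos : A.posGraded) {σ : Type} {dg : σ → ℤ} {j : ℤ}
    {x : Π₀ s : σ, A.H (dg s) j} (hx : x ∈ (FreeR A σ dg).aug j) (s : σ) (hs : dg s = j) :
    x s = 0 := by
  classical
  have key := (FreeR A σ dg).aug_map_mem
    (DFinsupp.evalAddMonoidHom s) (⊥ : AddSubgroup (A.H (dg s) j)) (fun m hm y b => ?_) hx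
  · exact AddSubgroup.mem_bot.mp key
  · rw [AddSubgroup.mem_bot]
    have hy : ∀ z : Π₀ s : σ, A.H (dg s) m,
        (DFinsupp.mapRange (fun _ h => A.mul h b) (fun _ => A.zero_mul' b) z) s = 0 := by
      intro z
      rw [DFinsupp.mapRange_apply]
      have : z s = 0 := hpos _ _ (hs ▸ hm) (z s)
      rw [this, A.zero_mul']
    exact hy y

theorem freeR_mem_aug (hpos : A.posGraded) {σ : Type} {dg : σ → ℤ} {j : ℤ}
    (x : Π₀ s : σ, A.H (dg s) j) (hx : ∀ s, dg s = j → x s = 0) :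
    x ∈ (FreeR A σ dg).aug j := by
  classical
  have hrep : x = ∑ s ∈ x.support, DFinsupp.single s (x s) := by
    conv_lhs => rw [← DFinsupp.sum_single (f := x)]
    rfl
  rw [hrep]
  refine AddSubgroup.sum_mem _ (fun s _ => ?_)
  rcases lt_trichotomy (dg s) j with h | h | h
  · have : DFinsupp.single s (x s)
        = (FreeR A σ dg).act (DFinsupp.single s (A.one (dg s))) (x s) := by
      rw [FreeR_act_single, A.one_mul]
    rw [this]
    exact (FreeR A σ dg).act_mem_aug h _ _
  · rw [hx s h, DFinsupp.single_zero]
    exact AddSubgroup.zero_mem _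
  · have : x s = 0 := hpos _ _ h (x s)
    rw [this, DFinsupp.single_zero]
    exact AddSubgroup.zero_mem _

theorem freeHom_single {σ : Type} [DecidableEq σ] {dg : σ → ℤ} {M : RMod A}
    (g : ∀ s, M.M (dg s)) {i : ℤ} (s : σ) (c : A.H (dg s) i) :
    (freeHom M g).f i (DFinsupp.single s c) = M.act (g s) c := by
  show DFinsupp.sumAddHom (fun s =>
    ({ toFun := fun a : A.H (dg s) i => M.act (g s) a
       map_zero' := M.act_zero _
       map_add' := fun a b => M.act_add _ a b } : A.H (dg s) i →+ M.M i))
      (DFinsupp.single s c) = M.act (g s) c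
  rw [DFinsupp.sumAddHom_single]
  rfl

/-- RMod homomorphisms are automatically `k`-linear. -/
theorem RModHom.map_smul' {M N : RMod A} (f : RModHom M N) {i : ℤ} (c : k) (x : M.M i) :
    f.f i (c • x) = c • f.f i x := by
  have h1 : c • x = M.act x (c • A.one i) := by rw [M.act_smul, M.act_one]
  have h2 : c • f.f i x = N.act (f.f i x) (c • A.one i) := by rw [N.act_smul, N.act_one]
  rw [h1, h2, f.map_act]

/-- `M.aug j` is closed under scalar multiplication by `k`. -/
theorem RMod.aug_smul_mem (M : RMod A) {j : ℤ} (c : k) {x : M.M j} (hx : x ∈ M.aug j) :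
    c • x ∈ M.aug j := by
  refine M.aug_map_mem (AddMonoidHom.mk' (fun v => c • v) (fun v w => smul_add c v w))
    (M.aug j) (fun m hm y b => ?_) hx
  simp only [AddMonoidHom.mk'_apply]
  rw [← M.act_smul]
  exact M.act_mem_aug hm _ _

/-- Fill a `DFinsupp` componentwise by choice. -/
theorem dfinsupp_mapRange_surj {σ : Type} {β₁ β₂ : σ → Type}
    [∀ s, AddCommGroup (β₁ s)] [∀ s, AddCommGroup (β₂ s)]
    (f : ∀ s, β₁ s →+ β₂ s) (x : Π₀ s, β₂ s) (h : ∀ s, ∃ u, f s u = x s) :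
    ∃ y : Π₀ s, β₁ s, DFinsupp.mapRange.addMonoidHom f y = x := by
  classical
  refine ⟨∑ s ∈ x.support, DFinsupp.single s (h s).choose, ?_⟩
  rw [map_sum]
  have : ∀ s ∈ x.support,
      DFinsupp.mapRange.addMonoidHom f (DFinsupp.single s (h s).choose)
        = DFinsupp.single s (x s) := by
    intro s _
    rw [DFinsupp.mapRange.addMonoidHom_apply, DFinsupp.mapRange_single, (h s).choose_spec]
  rw [Finset.sum_congr rfl this]
  conv_rhs => rw [← DFinsupp.sum_single (f := x)]
  rfl

end Helpers

section MinCoverSec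

variable {k : Type} [Field k] {A : ZAlg k}

/-- A minimal free cover of a graded right module. -/
structure MinCover (M : RMod A) where
  σ : Type
  dg : σ → ℤ
  φ : RModHom (FreeR A σ dg) M
  surj : ∀ j : ℤ, Function.Surjective (φ.f j)
  minimal : ∀ (j : ℤ) (x : (FreeR A σ dg).M j), φ.f j x = 0 → x ∈ (FreeR A σ dg).aug j
  degbd : ∀ (d : ℤ), M.leftBddBy d → ∀ s, d ≤ dg s
  empty : (∀ (j : ℤ) (x : M.M j), x = 0) → IsEmpty σ

/-- Graded Nakayama: a map hitting all of `M/M·A_{≥1}` is surjective when `M`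
is left-bounded. -/
theorem RModHom.surj_of_span {P M : RMod A} (φ : RModHom P M) {d : ℤ} (hM : M.leftBddBy d)
    (hspan : ∀ (j : ℤ) (x : M.M j), ∃ w, x - φ.f j w ∈ M.aug j) (j : ℤ) :
    Function.Surjective (φ.f j) := by
  suffices key : ∀ (K : ℕ) (j : ℤ), j < d + K → Function.Surjective (φ.f j) by
    intro x
    exact key ((j - d).toNat + 1) j (by omega) x
  intro K
  induction K with
  | zero =>
    intro j hj x
    exact ⟨0, by rw [φ.map_zero]; exact (hM j (by omega) x).symm⟩
  | succ K ih =>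
    intro j hj x
    by_cases hj' : j < d + K
    · exact ih j hj' x
    obtain ⟨w, hw⟩ := hspan j x
    have haug : M.aug j ≤ (φ.addHom j).range := by
      refine (AddSubgroup.closure_le _).mpr ?_
      rintro _ ⟨m, hm, y, b, rfl⟩
      rcases lt_or_ge m d with hmd | hmd
      · refine ⟨0, ?_⟩
        rw [RModHom.addHom_apply, φ.map_zero, hM m hmd y, M.zero_act]
      · obtain ⟨z, hz⟩ := ih m (by omega) y
        refine ⟨P.act z b, ?_⟩
        rw [RModHom.addHom_apply, φ.map_act, hz]
    obtain ⟨u, hu⟩ := haug hw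
    rw [RModHom.addHom_apply] at hu
    exact ⟨w + u, by rw [φ.map_add, hu, add_sub_cancel]⟩

/-- Construction of a minimal free cover. -/
noncomputable def minCover (hA : A.connected) (M : RMod A) (d : ℤ) (hM : M.leftBddBy d) :
    MinCover M := by
  classical
  letI ringJ : ∀ j : ℤ, Ring (A.H j j) := fun j =>
    { (inferInstance : AddCommGroup (A.H j j)) with
      mul := fun a b => A.mul b a
      mul_assoc := fun a b c => (A.mul_assoc c b a).symm
      one := A.one j
      one_mul := fun a => A.mul_one a
      mul_one := fun a => A.one_mul a
      left_distrib := fun a b c => A.add_mul b c a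
      right_distrib := fun a b c => A.mul_add c a b
      zero_mul := fun a => A.mul_zero' a
      mul_zero := fun a => A.zero_mul' a }
  haveI ntJ : ∀ j : ℤ, Nontrivial (A.H j j) := fun j =>
    ⟨⟨A.one j, 0, (hA.2 j).1⟩⟩
  letI divJ : ∀ j : ℤ, DivisionRing (A.H j j) := fun j =>
    DivisionRing.ofIsUnitOrEqZero (fun a => by
      by_cases ha : a = 0
      · exact Or.inr ha
      · obtain ⟨b, hb1, hb2⟩ := (hA.2 j).2 a ha
        exact Or.inl ⟨⟨a, b, hb2, hb1⟩, rfl⟩)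
  letI smulQ : ∀ j : ℤ, SMul (A.H j j) (M.M j ⧸ M.aug j) := fun j =>
    ⟨fun c => QuotientAddGroup.map (M.aug j) (M.aug j)
      (AddMonoidHom.mk' (fun x => M.act x c) (fun x y => M.add_act x y c))
      (fun x hx => M.aug_act_mem (le_refl j) hx c)⟩
  have smulQ_mk : ∀ (j : ℤ) (c : A.H j j) (x : M.M j),
      c • (QuotientAddGroup.mk x : M.M j ⧸ M.aug j) = QuotientAddGroup.mk (M.act x c) :=
    fun j c x => QuotientAddGroup.map_mk _ _ _ _ x
  letI modQ : ∀ j : ℤ, Module (A.H j j) (M.M j ⧸ M.aug j) := fun j =>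
    { one_smul := fun q => by
        refine QuotientAddGroup.induction_on q (fun x => ?_)
        rw [smulQ_mk]
        show QuotientAddGroup.mk (M.act x (A.one j)) = _
        rw [M.act_one]
      mul_smul := fun c c' q => by
        refine QuotientAddGroup.induction_on q (fun x => ?_)
        rw [smulQ_mk, smulQ_mk, smulQ_mk]
        show QuotientAddGroup.mk (M.act x (A.mul c' c)) = _
        rw [← M.act_mul]
      smul_zero := fun c => map_zero _
      smul_add := fun c q q' => map_add _ q q'
      add_smul := fun c c' q => by
        refine QuotientAddGroup.induction_on q (fun x => ?_)
        rw [smulQ_mk, smulQ_mk, smulQ_mk, M.act_add]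
        rfl
      zero_smul := fun q => by
        refine QuotientAddGroup.induction_on q (fun x => ?_)
        rw [smulQ_mk, M.act_zero]
        rfl }
  let B : ∀ j : ℤ, Set (M.M j ⧸ M.aug j) := fun j =>
    Module.Basis.ofVectorSpaceIndex (A.H j j) (M.M j ⧸ M.aug j)
  let bas : ∀ j : ℤ, Module.Basis (B j) (A.H j j) (M.M j ⧸ M.aug j) := fun j =>
    Module.Basis.ofVectorSpace (A.H j j) (M.M j ⧸ M.aug j)
  let σ : Type := Σ j : ℤ, ↥(B j)
  let dg : σ → ℤ := fun s => s.1
  let g : ∀ s : σ, M.M (dg s) := fun s => Quotient.out (s.2 : M.M s.1 ⧸ M.aug s.1)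
  have hg : ∀ s : σ, QuotientAddGroup.mk (g s) = (s.2 : M.M s.1 ⧸ M.aug s.1) :=
    fun s => Quotient.out_eq _
  -- every basis vector has a nonzero representative, giving degree bounds
  have hBnonzero : ∀ (j : ℤ), (∀ x : M.M j, x = 0) → IsEmpty ↥(B j) := by
    intro j hj
    refine ⟨fun b => ?_⟩
    have h0 : ∀ q : M.M j ⧸ M.aug j, q = 0 := by
      intro q
      refine QuotientAddGroup.induction_on q (fun x => ?_)
      rw [hj x]
      rfl
    exact Module.Basis.ne_zero (bas j) b (h0 _)
  let φ : RModHom (FreeR A σ dg) M := freeHom M g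
  have hspan : ∀ (j : ℤ) (x : M.M j), ∃ w, x - φ.f j w ∈ M.aug j := by
    intro j x
    set xq : M.M j ⧸ M.aug j := QuotientAddGroup.mk x with hxq
    set r := (bas j).repr xq with hr
    refine ⟨∑ b ∈ r.support, DFinsupp.single (⟨j, b⟩ : σ) (r b), ?_⟩
    have hφw : φ.f j (∑ b ∈ r.support, DFinsupp.single (⟨j, b⟩ : σ) (r b))
        = ∑ b ∈ r.support, M.act (g ⟨j, b⟩) (r b) := by
      erw [show φ.f j (∑ b ∈ r.support, DFinsupp.single (⟨j, b⟩ : σ) (r b))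
          = φ.addHom j (∑ b ∈ r.support, DFinsupp.single (⟨j, b⟩ : σ) (r b)) from rfl,
        map_sum]
      refine Finset.sum_congr rfl (fun b _ => ?_)
      erw [RModHom.addHom_apply]
      exact freeHom_single g (⟨j, b⟩ : σ) (r b)
    rw [← QuotientAddGroup.eq_zero_iff]
    have : QuotientAddGroup.mk (x - φ.f j (∑ b ∈ r.support, DFinsupp.single (⟨j, b⟩ : σ) (r b)))
        = xq - QuotientAddGroup.mk (φ.f j (∑ b ∈ r.support,
            DFinsupp.single (⟨j, b⟩ : σ) (r b))) := rfl
    rw [this, hφw]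
    have hmk : (QuotientAddGroup.mk (∑ b ∈ r.support, M.act (g ⟨j, b⟩) (r b))
        : M.M j ⧸ M.aug j) = ∑ b ∈ r.support, (r b) • ((b : M.M j ⧸ M.aug j)) := by
      rw [show (QuotientAddGroup.mk (∑ b ∈ r.support, M.act (g ⟨j, b⟩) (r b))
          : M.M j ⧸ M.aug j) = (QuotientAddGroup.mk' (M.aug j))
            (∑ b ∈ r.support, M.act (g ⟨j, b⟩) (r b)) from rfl, map_sum]
      refine Finset.sum_congr rfl (fun b _ => ?_)
      rw [show (QuotientAddGroup.mk' (M.aug j)) (M.act (g ⟨j,b⟩) (r b))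
          = QuotientAddGroup.mk (M.act (g ⟨j,b⟩) (r b)) from rfl, ← smulQ_mk, hg ⟨j, b⟩]
    rw [hmk]
    have hrepr : ∑ b ∈ r.support, (r b) • ((b : M.M j ⧸ M.aug j)) = xq := by
      have := (bas j).linearCombination_repr xq
      rw [Finsupp.linearCombination_apply, Finsupp.sum] at this
      rw [← this, ← hr]
      refine Finset.sum_congr rfl (fun b _ => ?_)
      rw [Module.Basis.coe_ofVectorSpace]
    rw [hrepr, sub_self]
  refine ⟨σ, dg, φ, φ.surj_of_span hM hspan, ?_, ?_, ?_⟩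
  · -- minimality
    intro j x hx
    change Π₀ s : σ, A.H s.1 j at x
    refine freeR_mem_aug hA.1 x (fun s hs => ?_)
    obtain ⟨j', b⟩ := s
    have hj' : j' = j := hs
    subst hj'
    -- use linear independence of the basis
    have hli := (bas j').linearIndependent
    rw [linearIndependent_iff''] at hli
    set f : σ → ↥(B j') := fun s =>
      if h : s.1 = j' then (h ▸ s.2) else b with hf
    have hfj : ∀ c : ↥(B j'), f ⟨j', c⟩ = c := fun c => dif_pos rfl
    set t : Finset ↥(B j') :=
      (x.support.filter (fun s => s.1 = j')).image f with ht
    have hlzero : ∀ c : ↥(B j'), c ∉ t → x ⟨j', c⟩ = 0 := by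
      intro c hc
      by_contra hne
      refine hc ?_
      rw [ht]
      refine Finset.mem_image.mpr ⟨⟨j', c⟩, ?_, hfj c⟩
      rw [Finset.mem_filter]
      exact ⟨DFinsupp.mem_support_iff.mpr hne, rfl⟩
    have hsum : ∑ c ∈ t, (x ⟨j', c⟩) • ((c : M.M j' ⧸ M.aug j')) = 0 := by
      -- compute the class of φ x
      have hνx : (QuotientAddGroup.mk' (M.aug j')) (φ.f j' x) = 0 := by
        rw [hx, map_zero]
      have hexp : (QuotientAddGroup.mk' (M.aug j')) (φ.f j' x)
          = ∑ s ∈ x.support, (QuotientAddGroup.mk' (M.aug j')) (M.act (g s) (x s)) := by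
        have h1 : φ.f j' x = φ.addHom j' x := rfl
        rw [h1]
        conv_lhs => rw [← DFinsupp.sum_single (f := x)]
        erw [show (x.sum fun s v => DFinsupp.single s v) =
          ∑ s ∈ x.support, DFinsupp.single s (x s) from rfl, map_sum, map_sum]
        refine Finset.sum_congr rfl (fun s _ => ?_)
        erw [RModHom.addHom_apply, freeHom_single]
      rw [hexp] at hνx
      -- split the sum
      rw [← Finset.sum_filter_add_sum_filter_not x.support (fun s => s.1 = j')] at hνx
      have hlow : ∑ s ∈ x.support.filter (fun s => ¬ s.1 = j'),
          (QuotientAddGroup.mk' (M.aug j')) (M.act (g s) (x s)) = 0 := by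
        refine Finset.sum_eq_zero (fun s hs => ?_)
        rcases lt_trichotomy s.1 j' with h | h | h
        · rw [QuotientAddGroup.mk'_apply, QuotientAddGroup.eq_zero_iff]
          exact M.act_mem_aug h _ _
        · exact absurd h (by simpa using (Finset.mem_filter.mp hs).2)
        · have : x s = 0 := hA.1 _ _ h (x s)
          rw [this, M.act_zero, map_zero]
      rw [hlow, add_zero] at hνx
      rw [← hνx, ht]
      rw [Finset.sum_image ?hinj]
      case hinj =>
        intro s hs s' hs' hss
        have h1 : s.1 = j' := (Finset.mem_filter.mp hs).2
        have h2 : s'.1 = j' := (Finset.mem_filter.mp hs').2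
        obtain ⟨s1, s2⟩ := s
        obtain ⟨s1', s2'⟩ := s'
        cases h1
        cases h2
        rw [hfj, hfj] at hss
        rw [hss]
      refine (Finset.sum_congr rfl (fun s hs => ?_)).symm
      have h1 : s.1 = j' := (Finset.mem_filter.mp hs).2
      obtain ⟨s1, s2⟩ := s
      cases h1
      rw [hfj]
      rw [QuotientAddGroup.mk'_apply, ← smulQ_mk, hg ⟨s1, s2⟩]
    have := hli t (fun c => x ⟨j', c⟩) hlzero (by
      rw [← hsum]
      refine Finset.sum_congr rfl (fun c _ => ?_)
      rw [Module.Basis.coe_ofVectorSpace]) b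
    exact this
  · -- degree bound
    intro d' hd' s
    by_contra hlt
    have hsd : s.1 < d' := not_le.mp hlt
    have : ∀ x : M.M s.1, x = 0 := fun x => hd' s.1 hsd x
    exact (hBnonzero s.1 this).false s.2
  · -- emptiness
    intro hzero
    refine ⟨fun s => (hBnonzero s.1 (hzero s.1)).false s.2⟩

end MinCoverSec

section TowerSec

variable {k : Type} [Field k] {A : ZAlg k}

/-- Kernel of a module homomorphism, in degree `j`, as a `k`-submodule. -/
def kerSub {P M : RMod A} (φ : RModHom P M) (j : ℤ) : Submodule k (P.M j) where
  carrier := {x | φ.f j x = 0}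
  add_mem' := by
    intro a b ha hb
    simp only [Set.mem_setOf_eq] at *
    rw [φ.map_add, ha, hb, add_zero]
  zero_mem' := φ.map_zero j
  smul_mem' := by
    intro c x hx
    simp only [Set.mem_setOf_eq] at *
    rw [φ.map_smul', hx, smul_zero]

/-- Kernel of a module homomorphism as a graded right module. -/
def kerMod {P M : RMod A} (φ : RModHom P M) : RMod A where
  M j := ↥(kerSub φ j)
  act {i j} x a := ⟨P.act x.1 a, by
    show φ.f j (P.act x.1 a) = 0
    rw [φ.map_act, show φ.f i x.1 = 0 from x.2, M.zero_act]⟩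
  act_one x := Subtype.ext (P.act_one x.1)
  act_mul x a b := Subtype.ext (P.act_mul x.1 a b)
  add_act x y a := Subtype.ext (P.add_act x.1 y.1 a)
  act_add x a b := Subtype.ext (P.act_add x.1 a b)
  smul_act c x a := Subtype.ext (P.smul_act c x.1 a)
  act_smul c x a := Subtype.ext (P.act_smul c x.1 a)

/-- Inclusion of the kernel. -/
def kerIncl {P M : RMod A} (φ : RModHom P M) : RModHom (kerMod φ) P where
  f _ x := x.1
  map_add _ _ _ := rfl
  map_act _ _ := rfl

theorem freeR_bdd (hpos : A.posGraded) {σ : Type} {dg : σ → ℤ} {d : ℤ}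
    (hdeg : ∀ s, d ≤ dg s) : (FreeR A σ dg).leftBddBy d := by
  intro j hj x
  have key : ∀ y : Π₀ s : σ, A.H (dg s) j, y = 0 := by
    intro y
    ext s
    rw [DFinsupp.zero_apply]
    exact hpos _ _ (by have := hdeg s; omega) (y s)
  exact key x

theorem kerMod_bdd {P M : RMod A} (φ : RModHom P M) {d : ℤ} (hP : P.leftBddBy d) :
    (kerMod φ).leftBddBy d := by
  intro j hj x
  exact Subtype.ext (hP j hj x.1)

variable (hA : A.connected) (N : RMod A) (d : ℤ) (hN : N.leftBddBy d)

/-- The tower of syzygies of `N`. -/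
noncomputable def towerSt : ℕ → Σ' M : RMod A, M.leftBddBy d := fun p =>
  Nat.rec (motive := fun _ => Σ' M : RMod A, M.leftBddBy d)
    ⟨N, hN⟩
    (fun _ X =>
      ⟨kerMod (minCover hA X.1 d X.2).φ,
        kerMod_bdd _ (freeR_bdd hA.1 ((minCover hA X.1 d X.2).degbd d X.2))⟩) p

/-- The minimal cover at stage `p`. -/
noncomputable def mcAt (p : ℕ) : MinCover (towerSt hA N d hN p).1 :=
  minCover hA (towerSt hA N d hN p).1 d (towerSt hA N d hN p).2

/-- The minimal free resolution of `N`. -/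
noncomputable def minRes : FreeResR N where
  idx p := (mcAt hA N d hN p).σ
  deg p := (mcAt hA N d hN p).dg
  d p := RModHom.comp (kerIncl (mcAt hA N d hN p).φ) ((mcAt hA N d hN (p+1)).φ)
  aug := (mcAt hA N d hN 0).φ

theorem minRes_isRes : (minRes hA N d hN).IsRes := by
  refine ⟨(mcAt hA N d hN 0).surj, ?_, ?_, ?_, ?_⟩
  · intro j x
    exact ((mcAt hA N d hN 1).φ.f j x).2
  · intro j x hx
    obtain ⟨y, hy⟩ := (mcAt hA N d hN 1).surj j ⟨x, hx⟩
    exact ⟨y, congrArg Subtype.val hy⟩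
  · intro n j x
    show (((mcAt hA N d hN (n+1)).φ.f j (((mcAt hA N d hN (n+2)).φ.f j x)).1)).1 = 0
    have h : ((mcAt hA N d hN (n+1)).φ.f j (((mcAt hA N d hN (n+2)).φ.f j x)).1) = 0 :=
      ((mcAt hA N d hN (n+2)).φ.f j x).2
    rw [h]
    rfl
  · intro n j x hx
    have hx' : ((mcAt hA N d hN (n+1)).φ.f j x) = 0 := Subtype.ext hx
    obtain ⟨y, hy⟩ := (mcAt hA N d hN (n+2)).surj j ⟨x, hx'⟩
    exact ⟨y, congrArg Subtype.val hy⟩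

theorem minRes_isMinimal : (minRes hA N d hN).IsMinimal := by
  intro n j x
  exact (mcAt hA N d hN n).minimal j _ (((mcAt hA N d hN (n+1)).φ.f j x).2)

theorem minRes_empty_succ (m : ℕ) (h : IsEmpty ((minRes hA N d hN).idx m)) :
    IsEmpty ((minRes hA N d hN).idx (m+1)) := by
  refine (mcAt hA N d hN (m+1)).empty (fun j x => ?_)
  refine Subtype.ext ?_
  have key : ∀ y : Π₀ s : (mcAt hA N d hN m).σ, A.H ((mcAt hA N d hN m).dg s) j, y = 0 := by
    intro y
    ext s
    exact (h.false s).elim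
  exact key x.1

theorem minRes_lenLE (n : ℕ) (h : IsEmpty ((minRes hA N d hN).idx (n+1))) :
    (minRes hA N d hN).LenLE n := by
  have key : ∀ q : ℕ, IsEmpty ((minRes hA N d hN).idx (n+1+q)) := by
    intro q
    induction q with
    | zero => exact h
    | succ q ih => exact minRes_empty_succ hA N d hN _ ih
  intro m hm
  have : m = n + 1 + (m - n - 1) := by omega
  rw [this]
  exact key _

end TowerSec

section ChaseSec

open scoped Classical

variable {k : Type} [Field k] {A : ZAlg k}
variable {hp : A.posGraded} {j : ℤ}

/-- The tensor `M ⊗_A G_q` for `G_q` a free left module: `⊕_s M_{deg s}`. -/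
abbrev TT (G : FreeResL (A0e A hp j)) (M : RMod A) (q : ℕ) : Type :=
  Π₀ s : G.idx q, M.M (G.deg q s)

variable (G : FreeResL (A0e A hp j))

/-- Functoriality of `TT` in `M`. -/
noncomputable def Tmap {M M' : RMod A} (f : RModHom M M') (q : ℕ) :
    TT G M q →+ TT G M' q :=
  DFinsupp.mapRange.addMonoidHom (fun s => f.addHom (G.deg q s))

theorem Tmap_apply {M M' : RMod A} (f : RModHom M M') (q : ℕ) (x : TT G M q)
    (s : G.idx q) : Tmap G f q x s = f.f _ (x s) := by
  show DFinsupp.mapRange (fun s v => f.addHom (G.deg q s) v)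
    (fun s => (f.addHom (G.deg q s)).map_zero) x s = _
  rw [DFinsupp.mapRange_apply]
  rfl

theorem Tmap_single {M M' : RMod A} (f : RModHom M M') (q : ℕ) (s : G.idx q)
    (m : M.M (G.deg q s)) :
    Tmap G f q (DFinsupp.single s m) = DFinsupp.single s (f.f _ m) := by
  show DFinsupp.mapRange (fun s v => f.addHom (G.deg q s) v)
    (fun s => (f.addHom (G.deg q s)).map_zero) (DFinsupp.single s m) = _
  rw [DFinsupp.mapRange_single]
  rfl

/-- `m ⊗ w` for `w` an element of the free left module `G_q`. -/
noncomputable def tstar (M : RMod A) {i : ℤ} (q : ℕ) (m : M.M i)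
    (w : Π₀ s : G.idx q, A.H i (G.deg q s)) : TT G M q :=
  DFinsupp.mapRange (fun _ a => M.act m a) (fun _ => M.act_zero m) w

theorem tstar_apply (M : RMod A) {i : ℤ} (q : ℕ) (m : M.M i)
    (w : Π₀ s : G.idx q, A.H i (G.deg q s)) (s : G.idx q) :
    tstar G M q m w s = M.act m (w s) := DFinsupp.mapRange_apply _ _ w s

theorem tstar_single (M : RMod A) {i : ℤ} (q : ℕ) (m : M.M i) (s : G.idx q)
    (a : A.H i (G.deg q s)) :
    tstar G M q m (DFinsupp.single s a) = DFinsupp.single s (M.act m a) :=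
  DFinsupp.mapRange_single

theorem tstar_zero_right (M : RMod A) {i : ℤ} (q : ℕ) (m : M.M i) :
    tstar G M q m 0 = 0 := by
  ext s
  rw [tstar_apply]
  simp only [DFinsupp.zero_apply, M.act_zero]

theorem tstar_add_right (M : RMod A) {i : ℤ} (q : ℕ) (m : M.M i)
    (w w' : Π₀ s : G.idx q, A.H i (G.deg q s)) :
    tstar G M q m (w + w') = tstar G M q m w + tstar G M q m w' := by
  ext s
  rw [DFinsupp.add_apply, tstar_apply, tstar_apply, tstar_apply, DFinsupp.add_apply,
    M.act_add]

theorem tstar_add_left (M : RMod A) {i : ℤ} (q : ℕ) (m m' : M.M i)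
    (w : Π₀ s : G.idx q, A.H i (G.deg q s)) :
    tstar G M q (m + m') w = tstar G M q m w + tstar G M q m' w := by
  ext s
  rw [DFinsupp.add_apply, tstar_apply, tstar_apply, tstar_apply, M.add_act]

/-- `tstar` intertwines the left action: `m ⊗ (a·w) = (m·a) ⊗ w`. -/
theorem tstar_act (M : RMod A) {i i' : ℤ} (q : ℕ) (m : M.M i) (a : A.H i i')
    (w : Π₀ s : G.idx q, A.H i' (G.deg q s)) :
    tstar G M q m ((G.F q).act a w) = tstar G M q (M.act m a) w := by
  have hact : (G.F q).act a w
      = DFinsupp.mapRange (fun _ c => A.mul a c) (fun _ => A.mul_zero' a) w := rfl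
  rw [hact]
  ext s
  rw [tstar_apply, tstar_apply, DFinsupp.mapRange_apply, ← M.act_mul]

/-- Naturality of `tstar`. -/
theorem Tmap_tstar {M M' : RMod A} (f : RModHom M M') {i : ℤ} (q : ℕ) (m : M.M i)
    (w : Π₀ s : G.idx q, A.H i (G.deg q s)) :
    Tmap G f q (tstar G M q m w) = tstar G M' q (f.f i m) w := by
  ext s
  rw [Tmap_apply, tstar_apply, tstar_apply, f.map_act]

/-- Additive version of an `LModHom` in a fixed degree. -/
def LModHom.addHom {M N : LMod A} (f : LModHom M N) (i : ℤ) : M.M i →+ N.M i :=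
  AddMonoidHom.mk' (f.f i) (f.map_add i)

theorem LModHom.map_zero'' {M N : LMod A} (f : LModHom M N) (i : ℤ) :
    f.f i (0 : M.M i) = 0 := (f.addHom i).map_zero

/-- The matrix coefficients of the differential `G.d q`. -/
noncomputable def gcoef (q : ℕ) (s : G.idx (q+1)) :
    Π₀ s' : G.idx q, A.H (G.deg (q+1) s) (G.deg q s') :=
  (G.d q).f (G.deg (q+1) s) (DFinsupp.single s (A.one _))

/-- A free left module element decomposes via the action on generators. -/
theorem freeL_single_eq_act {σ : Type} {dgl : σ → ℤ} {i : ℤ} (s : σ) (a : A.H i (dgl s)) :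
    (DFinsupp.single s a : Π₀ t : σ, A.H i (dgl t))
      = (FreeL A σ dgl).act a (DFinsupp.single s (A.one (dgl s))) := by
  show _ = DFinsupp.mapRange (fun _ c => A.mul a c) (fun _ => A.mul_zero' a)
    (DFinsupp.single s (A.one (dgl s)))
  rw [DFinsupp.mapRange_single, A.mul_one]

/-- An `LModHom` from a free left module, evaluated on `single`. -/
theorem lhom_single {σ : Type} {dgl : σ → ℤ} {P : LMod A}
    (ψ : LModHom (FreeL A σ dgl) P) {i : ℤ} (s : σ) (a : A.H i (dgl s)) :
    ψ.f i (DFinsupp.single s a) = P.act a (ψ.f (dgl s) (DFinsupp.single s (A.one (dgl s)))) := by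
  erw [freeL_single_eq_act, ψ.map_act]

/-- The differential on `TT`. -/
noncomputable def tdel (M : RMod A) (q : ℕ) : TT G M (q+1) →+ TT G M q :=
  DFinsupp.sumAddHom (fun s => AddMonoidHom.mk'
    (fun m => tstar G M q m (gcoef G q s))
    (fun m m' => tstar_add_left G M q m m' (gcoef G q s)))

theorem tdel_single (M : RMod A) (q : ℕ) (s : G.idx (q+1)) (m : M.M (G.deg (q+1) s)) :
    tdel G M q (DFinsupp.single s m) = tstar G M q m (gcoef G q s) :=
  DFinsupp.sumAddHom_single _ _ _

/-- `tdel` is `1 ⊗ (G.d q)` : compatibility with `tstar`. -/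
theorem tdel_tstar (M : RMod A) {i : ℤ} (q : ℕ) (m : M.M i)
    (w : Π₀ s : G.idx (q+1), A.H i (G.deg (q+1) s)) :
    tdel G M q (tstar G M (q+1) m w) = tstar G M q m ((G.d q).f i w) := by
  induction w using DFinsupp.induction with
  | h0 =>
    erw [tstar_zero_right, map_zero, LModHom.map_zero'', tstar_zero_right]
  | ha s b f hf hb ih =>
    erw [tstar_add_right, map_add, ih, (G.d q).map_add, tstar_add_right]
    congr 1
    erw [tstar_single, tdel_single, lhom_single, tstar_act]
    rfl

theorem tdel_Tmap {M M' : RMod A} (f : RModHom M M') (q : ℕ) (x : TT G M (q+1)) :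
    tdel G M' q (Tmap G f (q+1) x) = Tmap G f q (tdel G M q x) := by
  have : (tdel G M' q).comp (Tmap G f (q+1)) = (Tmap G f q).comp (tdel G M q) := by
    refine DFinsupp.addHom_ext' (fun s => ?_)
    refine AddMonoidHom.ext (fun m => ?_)
    show tdel G M' q (Tmap G f (q+1) (DFinsupp.single s m))
      = Tmap G f q (tdel G M q (DFinsupp.single s m))
    rw [Tmap_single, tdel_single, tdel_single, Tmap_tstar]
  exact DFunLike.congr_fun this x

theorem tdel_tdel (hG : G.IsRes) (M : RMod A) (q : ℕ) (x : TT G M (q+2)) :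
    tdel G M q (tdel G M (q+1) x) = 0 := by
  have : (tdel G M q).comp (tdel G M (q+1)) = 0 := by
    refine DFinsupp.addHom_ext' (fun s => ?_)
    refine AddMonoidHom.ext (fun m => ?_)
    show tdel G M q (tdel G M (q+1) (DFinsupp.single s m)) = 0
    rw [tdel_single, tdel_tstar]
    have h0 : (G.d q).f _ (gcoef G (q+1) s) = 0 := hG.2.2.2.1 q _ _
    erw [h0, tstar_zero_right]
  exact DFunLike.congr_fun this x

theorem Tmap_Tmap_zero {M M' M'' : RMod A} (f : RModHom M' M'') (g : RModHom M M')
    (h : ∀ (i : ℤ) (v : M.M i), f.f i (g.f i v) = 0) (q : ℕ) (x : TT G M q) :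
    Tmap G f q (Tmap G g q x) = 0 := by
  ext s
  rw [Tmap_apply, Tmap_apply, h]
  rfl

/-- Column exactness: `TT` preserves degreewise exactness. -/
theorem Tmap_exact {M M' M'' : RMod A} (f : RModHom M' M'') (g : RModHom M M')
    (hex : ∀ (i : ℤ) (v : M'.M i), f.f i v = 0 → ∃ u, g.f i u = v)
    (q : ℕ) (x : TT G M' q) (hx : Tmap G f q x = 0) : ∃ y, Tmap G g q y = x := by
  refine dfinsupp_mapRange_surj (fun s => g.addHom (G.deg q s)) x (fun s => ?_)
  refine hex _ (x s) ?_
  have h1 : Tmap G f q x s = 0 := by rw [hx]; rfl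
  rw [Tmap_apply] at h1
  exact h1

end ChaseSec

section ChaseSecB

open scoped Classical

variable {k : Type} [Field k] {A : ZAlg k}
variable {hp : A.posGraded} {j : ℤ}

/-- Choose a representative of a class in `A_0e_j`. -/
noncomputable def glift {p : ℤ} (γ : (A0e A hp j).M p) : A.H p j :=
  (Submodule.Quotient.mk_surjective _ γ).choose

theorem glift_spec {p : ℤ} (γ : (A0e A hp j).M p) :
    (Submodule.Quotient.mk (glift γ) : (A0e A hp j).M p) = γ :=
  (Submodule.Quotient.mk_surjective _ γ).choose_spec

theorem headSub_act_mem (M : RMod A) {p : ℤ} (m : M.M p) {c : A.H p j}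
    (hc : c ∈ A.headSub j (j-1) p) : M.act m c ∈ M.aug j := by
  by_cases hpj : p ≤ j - 1
  · exact M.act_mem_aug (by omega) m c
  · have hbot : A.headSub j (j-1) p = ⊥ := if_neg hpj
    rw [hbot, Submodule.mem_bot] at hc
    rw [hc, M.act_zero]
    exact AddSubgroup.zero_mem _

theorem act_glift_congr (M : RMod A) {p : ℤ} (m : M.M p) (c : A.H p j)
    (γ : (A0e A hp j).M p) (h : (Submodule.Quotient.mk c : (A0e A hp j).M p) = γ) :
    M.act m (glift γ) - M.act m c ∈ M.aug j := by
  rw [← M.act_sub]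
  refine headSub_act_mem M m ?_
  rw [← Submodule.Quotient.eq]
  rw [glift_spec, h]

theorem act_glift_zero (M : RMod A) {p : ℤ} (m : M.M p) :
    M.act m (glift (0 : (A0e A hp j).M p)) ∈ M.aug j := by
  have := act_glift_congr M m 0 (0 : (A0e A hp j).M p) (by rw [Submodule.Quotient.mk_zero]; rfl)
  rwa [M.act_zero, sub_zero] at this

theorem act_glift_add (M : RMod A) {p : ℤ} (m : M.M p) (γ₁ γ₂ : (A0e A hp j).M p) :
    M.act m (glift (γ₁ + γ₂)) - M.act m (glift γ₁) - M.act m (glift γ₂) ∈ M.aug j := by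
  have h := act_glift_congr M m (glift γ₁ + glift γ₂) (γ₁ + γ₂) (by
    rw [Submodule.Quotient.mk_add, glift_spec, glift_spec]; rfl)
  rwa [M.act_add, ← sub_sub] at h

variable (G : FreeResL (A0e A hp j))

/-- Classes of the generators of `G_0` in `A_0e_j`. -/
noncomputable def gamma0 (s : G.idx 0) : (A0e A hp j).M (G.deg 0 s) :=
  G.aug.f _ (DFinsupp.single s (A.one _))

/-- The augmentation `M ⊗ G_0 → M_j` (defined via chosen representatives). -/
noncomputable def eps (M : RMod A) : TT G M 0 →+ M.M j :=
  DFinsupp.sumAddHom (fun s => AddMonoidHom.mk'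
    (fun m => M.act m (glift (gamma0 G s)))
    (fun m m' => M.add_act m m' _))

theorem eps_single (M : RMod A) (s : G.idx 0) (m : M.M (G.deg 0 s)) :
    eps G M (DFinsupp.single s m) = M.act m (glift (gamma0 G s)) :=
  DFinsupp.sumAddHom_single _ _ _

theorem eps_natural {M M' : RMod A} (f : RModHom M M') (x : TT G M 0) :
    eps G M' (Tmap G f 0 x) = f.f j (eps G M x) := by
  have : (eps G M').comp (Tmap G f 0) = (f.addHom j).comp (eps G M) := by
    refine DFinsupp.addHom_ext' (fun s => ?_)
    refine AddMonoidHom.ext (fun m => ?_)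
    show eps G M' (Tmap G f 0 (DFinsupp.single s m)) = f.f j (eps G M (DFinsupp.single s m))
    rw [Tmap_single, eps_single, eps_single, f.map_act]
  exact DFunLike.congr_fun this x

/-- The class of `b · lift(γ_s)` is `aug(single s b)`. -/
theorem mk_mul_glift {i : ℤ} (s : G.idx 0) (b : A.H i (G.deg 0 s)) :
    (Submodule.Quotient.mk (A.mul b (glift (gamma0 G s)))
      : (A0e A hp j).M i) = G.aug.f i (DFinsupp.single s b) := by
  rw [lhom_single]
  show _ = (A0e A hp j).act b (gamma0 G s)
  conv_rhs => rw [← glift_spec (gamma0 G s)]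
  show _ = Submodule.mapQ _ _ (A.mulLeftLin b) _ (Submodule.Quotient.mk _)
  rw [Submodule.mapQ_apply]
  rfl

/-- `eps (m ⊗ w) ≡ m · (lift of aug(w))  mod M·A_{≥1}`. -/
theorem eps_tstar (M : RMod A) {i : ℤ} (m : M.M i)
    (w : Π₀ s : G.idx 0, A.H i (G.deg 0 s)) :
    eps G M (tstar G M 0 m w) - M.act m (glift (G.aug.f i w)) ∈ M.aug j := by
  induction w using DFinsupp.induction with
  | h0 =>
    erw [tstar_zero_right, map_zero, LModHom.map_zero'', zero_sub]
    exact AddSubgroup.neg_mem _ (act_glift_zero M m)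
  | ha s b f hf hb ih =>
    erw [tstar_add_right, map_add, G.aug.map_add]
    set E₁ := eps G M (tstar G M 0 m (DFinsupp.single s b)) with hE₁
    set E₂ := eps G M (tstar G M 0 m f) with hE₂
    set g₁ := M.act m (glift (G.aug.f i (DFinsupp.single s b))) with hg₁
    set g₂ := M.act m (glift (G.aug.f i f)) with hg₂
    set GG := M.act m (glift (G.aug.f i (DFinsupp.single s b) + G.aug.f i f)) with hGG
    have h₁ : E₁ - g₁ ∈ M.aug j := by
      have hcongr := act_glift_congr M m (A.mul b (glift (gamma0 G s))) _
        (mk_mul_glift G s b)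
      have hE : E₁ = M.act m (A.mul b (glift (gamma0 G s))) := by
        rw [hE₁, tstar_single, eps_single, M.act_mul]
      rw [hE, hg₁]
      have := AddSubgroup.neg_mem _ hcongr
      rwa [neg_sub] at this
    have h₂ : E₂ - g₂ ∈ M.aug j := ih
    have h₃ : GG - g₁ - g₂ ∈ M.aug j := act_glift_add M m _ _
    have hsplit : E₁ + E₂ - GG = (E₁ - g₁) + (E₂ - g₂) - (GG - g₁ - g₂) := by abel
    rw [hsplit]
    exact AddSubgroup.sub_mem _ (AddSubgroup.add_mem _ h₁ h₂) h₃

/-- `eps ∘ tdel` lands in `M·A_{≥1}`. -/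
theorem eps_tdel_mem (hG : G.IsRes) (M : RMod A) (x : TT G M 1) :
    eps G M (tdel G M 0 x) ∈ M.aug j := by
  induction x using DFinsupp.induction with
  | h0 =>
    rw [map_zero, map_zero]
    exact AddSubgroup.zero_mem _
  | ha s b f hf hb ih =>
    rw [map_add, map_add]
    refine AddSubgroup.add_mem _ ?_ ih
    rw [tdel_single]
    have h1 := eps_tstar G M b (gcoef G 0 s)
    have h2 : G.aug.f _ (gcoef G 0 s) = 0 := hG.2.1 _ _
    rw [h2] at h1
    have h3 : M.act b (glift (0 : (A0e A hp j).M (G.deg 1 s))) ∈ M.aug j :=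
      act_glift_zero M b
    have := AddSubgroup.add_mem _ h1 h3
    rwa [sub_add_cancel] at this

end ChaseSecB

section ChaseSecC

open scoped Classical

variable {k : Type} [Field k] {A : ZAlg k}
variable {hp : A.posGraded} {j : ℤ}
variable (G : FreeResL (A0e A hp j)) {σ : Type} (dgf : σ → ℤ)

/-- Swap of nested direct sums, one direction. -/
noncomputable def swp (q : ℕ) :
    (Π₀ s : G.idx q, Π₀ t : σ, A.H (dgf t) (G.deg q s)) →+
      (Π₀ t : σ, Π₀ s : G.idx q, A.H (dgf t) (G.deg q s)) :=
  DFinsupp.sumAddHom (fun s => DFinsupp.mapRange.addMonoidHom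
    (fun t => DFinsupp.singleAddHom (fun s' => A.H (dgf t) (G.deg q s')) s))

/-- Swap of nested direct sums, the other direction. -/
noncomputable def swq (q : ℕ) :
    (Π₀ t : σ, Π₀ s : G.idx q, A.H (dgf t) (G.deg q s)) →+
      (Π₀ s : G.idx q, Π₀ t : σ, A.H (dgf t) (G.deg q s)) :=
  DFinsupp.sumAddHom (fun t => DFinsupp.mapRange.addMonoidHom
    (fun s => DFinsupp.singleAddHom (fun t' => A.H (dgf t') (G.deg q s)) t))

theorem swp_single_single (q : ℕ) (s : G.idx q) (t : σ) (a : A.H (dgf t) (G.deg q s)) :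
    swp G dgf q (DFinsupp.single s (DFinsupp.single t a))
      = DFinsupp.single t (DFinsupp.single s a) := by
  show DFinsupp.sumAddHom _ _ = _
  rw [DFinsupp.sumAddHom_single, DFinsupp.mapRange.addMonoidHom_apply,
    DFinsupp.mapRange_single]
  rfl

theorem swq_single_single (q : ℕ) (s : G.idx q) (t : σ) (a : A.H (dgf t) (G.deg q s)) :
    swq G dgf q (DFinsupp.single t (DFinsupp.single s a))
      = DFinsupp.single s (DFinsupp.single t a) := by
  show DFinsupp.sumAddHom _ _ = _
  rw [DFinsupp.sumAddHom_single, DFinsupp.mapRange.addMonoidHom_apply,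
    DFinsupp.mapRange_single]
  rfl

theorem swq_swp (q : ℕ) (x : Π₀ s : G.idx q, Π₀ t : σ, A.H (dgf t) (G.deg q s)) :
    swq G dgf q (swp G dgf q x) = x := by
  have : (swq G dgf q).comp (swp G dgf q) = AddMonoidHom.id _ := by
    refine DFinsupp.addHom_ext' (fun s => ?_)
    refine DFinsupp.addHom_ext' (fun t => ?_)
    refine AddMonoidHom.ext (fun a => ?_)
    show swq G dgf q (swp G dgf q (DFinsupp.single s (DFinsupp.single t a)))
      = DFinsupp.single s (DFinsupp.single t a)
    rw [swp_single_single, swq_single_single]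
  exact DFunLike.congr_fun this x

theorem swp_swq (q : ℕ) (x : Π₀ t : σ, Π₀ s : G.idx q, A.H (dgf t) (G.deg q s)) :
    swp G dgf q (swq G dgf q x) = x := by
  have : (swp G dgf q).comp (swq G dgf q) = AddMonoidHom.id _ := by
    refine DFinsupp.addHom_ext' (fun t => ?_)
    refine DFinsupp.addHom_ext' (fun s => ?_)
    refine AddMonoidHom.ext (fun a => ?_)
    show swp G dgf q (swq G dgf q (DFinsupp.single t (DFinsupp.single s a)))
      = DFinsupp.single t (DFinsupp.single s a)
    rw [swq_single_single, swp_single_single]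
  exact DFunLike.congr_fun this x

theorem swp_injective (q : ℕ) : Function.Injective (swp G dgf q) := by
  intro a b h
  rw [← swq_swp G dgf q a, h, swq_swp]

/-- `swp` of `(single t a) ⊗ w`. -/
theorem swp_tstar (q : ℕ) (t : σ) {i : ℤ} (a : A.H (dgf t) i)
    (w : Π₀ s : G.idx q, A.H i (G.deg q s)) :
    swp G dgf q (tstar G (FreeR A σ dgf) q (DFinsupp.single t a) w)
      = DFinsupp.single t ((G.F q).act a w) := by
  induction w using DFinsupp.induction with
  | h0 =>
    erw [tstar_zero_right, map_zero, LMod.act_zero, DFinsupp.single_zero]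
  | ha s b f hf hb ih =>
    erw [tstar_add_right, map_add, ih, (G.F q).act_add, DFinsupp.single_add]
    congr 1
    erw [tstar_single]
    have hact : (FreeR A σ dgf).act (DFinsupp.single t a) b
        = DFinsupp.single t (A.mul a b) := FreeR_act_single t a b
    erw [hact, swp_single_single]
    congr 1
    show _ = DFinsupp.mapRange (fun _ c => A.mul a c) (fun _ => A.mul_zero' a)
      (DFinsupp.single s b)
    rw [DFinsupp.mapRange_single]

/-- Equivariance of `swp` with respect to the differentials. -/
theorem swp_tdel (q : ℕ) (z : TT G (FreeR A σ dgf) (q+1)) :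
    swp G dgf q (tdel G (FreeR A σ dgf) q z)
      = DFinsupp.mapRange.addMonoidHom (fun t => (G.d q).addHom (dgf t))
          (swp G dgf (q+1) z) := by
  have : (swp G dgf q).comp (tdel G (FreeR A σ dgf) q)
      = (DFinsupp.mapRange.addMonoidHom (fun t => (G.d q).addHom (dgf t))).comp
          (swp G dgf (q+1)) := by
    refine DFinsupp.addHom_ext' (fun s => ?_)
    refine DFinsupp.addHom_ext' (fun t => ?_)
    refine AddMonoidHom.ext (fun a => ?_)
    show swp G dgf q (tdel G (FreeR A σ dgf) q (DFinsupp.single s (DFinsupp.single t a)))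
      = DFinsupp.mapRange.addMonoidHom (fun t => (G.d q).addHom (dgf t))
          (swp G dgf (q+1) (DFinsupp.single s (DFinsupp.single t a)))
    erw [tdel_single, swp_tstar, swp_single_single, DFinsupp.mapRange.addMonoidHom_apply,
      DFinsupp.mapRange_single]
    have hkey : (G.d q).addHom (dgf t) (DFinsupp.single s a) = (G.F q).act a (gcoef G q s) := by
      show (G.d q).f (dgf t) (DFinsupp.single s a) = _
      rw [lhom_single]
      rfl
    rw [hkey]; rfl
  exact DFunLike.congr_fun this z

/-- The row augmentation in coordinates. -/
noncomputable def rowAug (t : σ) :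
    (Π₀ s : G.idx 0, A.H (dgf t) (G.deg 0 s)) →+ A.H (dgf t) j :=
  DFinsupp.sumAddHom (fun s => AddMonoidHom.mk'
    (fun a => A.mul a (glift (gamma0 G s)))
    (fun a b => A.add_mul a b _))

theorem rowAug_mk (t : σ) (v : Π₀ s : G.idx 0, A.H (dgf t) (G.deg 0 s)) :
    (Submodule.Quotient.mk (rowAug G dgf t v) : (A0e A hp j).M (dgf t))
      = G.aug.f (dgf t) v := by
  have : ((Submodule.mkQ (A.headSub j (j-1) (dgf t))).toAddMonoidHom).comp (rowAug G dgf t)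
      = (G.aug).addHom (dgf t) := by
    refine DFinsupp.addHom_ext' (fun s => ?_)
    refine AddMonoidHom.ext (fun a => ?_)
    show (Submodule.Quotient.mk (rowAug G dgf t (DFinsupp.single s a))
      : (A0e A hp j).M (dgf t)) = G.aug.f (dgf t) (DFinsupp.single s a)
    have h1 : rowAug G dgf t (DFinsupp.single s a) = A.mul a (glift (gamma0 G s)) :=
      DFinsupp.sumAddHom_single _ _ _
    rw [h1, mk_mul_glift G s a]
  exact DFunLike.congr_fun this v

/-- Components of `eps` factor through `swp` and `rowAug`. -/
theorem eps_swp (x : TT G (FreeR A σ dgf) 0) (t : σ) :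
    DFinsupp.evalAddMonoidHom t (eps G (FreeR A σ dgf) x)
      = rowAug G dgf t (DFinsupp.evalAddMonoidHom t (swp G dgf 0 x)) := by
  have : (DFinsupp.evalAddMonoidHom t).comp (eps G (FreeR A σ dgf))
      = ((rowAug G dgf t).comp (DFinsupp.evalAddMonoidHom t)).comp (swp G dgf 0) := by
    refine DFinsupp.addHom_ext' (fun s => ?_)
    refine DFinsupp.addHom_ext' (fun t' => ?_)
    refine AddMonoidHom.ext (fun a => ?_)
    show DFinsupp.evalAddMonoidHom t
        (eps G (FreeR A σ dgf) (DFinsupp.single s (DFinsupp.single t' a)))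
      = rowAug G dgf t (DFinsupp.evalAddMonoidHom t
          (swp G dgf 0 (DFinsupp.single s (DFinsupp.single t' a))))
    erw [eps_single, swp_single_single]
    have hact : (FreeR A σ dgf).act (DFinsupp.single t' a) (glift (gamma0 G s))
        = DFinsupp.single t' (A.mul a (glift (gamma0 G s))) := FreeR_act_single t' a _
    rw [hact]
    show (DFinsupp.single t' (A.mul a (glift (gamma0 G s))) : Π₀ t : σ, A.H (dgf t) j) t
      = rowAug G dgf t ((DFinsupp.single t' (DFinsupp.single s a)
          : Π₀ t : σ, Π₀ s : G.idx 0, A.H (dgf t) (G.deg 0 s)) t)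
    rcases eq_or_ne t t' with h | h
    · subst h
      rw [DFinsupp.single_eq_same, DFinsupp.single_eq_same]
      have hrow : rowAug G dgf t (DFinsupp.single s a) = A.mul a (glift (gamma0 G s)) :=
        DFinsupp.sumAddHom_single _ _ _
      rw [hrow]
    · erw [DFinsupp.single_eq_of_ne h, DFinsupp.single_eq_of_ne h, map_zero]
  exact DFunLike.congr_fun this x

end ChaseSecC

section ChaseSecD

open scoped Classical

variable {k : Type} [Field k] {A : ZAlg k}
variable {hp : A.posGraded} {j : ℤ}

theorem mapRangeAdd_apply {ι : Type} {β₁ β₂ : ι → Type}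
    [∀ i, AddCommGroup (β₁ i)] [∀ i, AddCommGroup (β₂ i)]
    (f : ∀ i, β₁ i →+ β₂ i) (y : Π₀ i, β₁ i) (t : ι) :
    DFinsupp.mapRange.addMonoidHom f y t = f t (y t) := by
  show DFinsupp.mapRange (fun i x => f i x) (fun i => (f i).map_zero) y t = _
  rw [DFinsupp.mapRange_apply]

variable (G : FreeResL (A0e A hp j)) {σ : Type} (dgf : σ → ℤ)

/-- Definitional identity between the free module carrier and the direct sum. -/
def ofD (x : Π₀ t : σ, A.H (dgf t) j) : (FreeR A σ dgf).M j := x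

include hp in
theorem freeAug_mk_zero {x : (FreeR A σ dgf).M j} (hx : x ∈ (FreeR A σ dgf).aug j)
    (t : σ) :
    (Submodule.Quotient.mk (DFinsupp.evalAddMonoidHom t x)
      : (A0e A hp j).M (dgf t)) = 0 := by
  have key := (FreeR A σ dgf).aug_map_mem
    (((A.headSub j (j-1) (dgf t)).mkQ).toAddMonoidHom.comp (DFinsupp.evalAddMonoidHom t))
    ⊥ (fun m hm y b => ?_) hx
  · exact AddSubgroup.mem_bot.mp key
  · rw [AddSubgroup.mem_bot]
    have happ2 : ∀ z : Π₀ t' : σ, A.H (dgf t') m,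
        (A.headSub j (j-1) (dgf t)).mkQ
          (DFinsupp.evalAddMonoidHom t ((FreeR A σ dgf).act z b)) = 0 := by
      intro z
      have hz : DFinsupp.evalAddMonoidHom t ((FreeR A σ dgf).act z b)
          = A.mul (z t) b := by
        show (DFinsupp.mapRange (fun _ h => A.mul h b) (fun _ => A.zero_mul' b) z) t = _
        rw [DFinsupp.mapRange_apply]
      rw [hz, Submodule.mkQ_apply, Submodule.Quotient.mk_eq_zero]
      by_cases htj : dgf t ≤ j - 1
      · show A.mul (z t) b ∈ (if dgf t ≤ j - 1 then ⊤ else ⊥ : Submodule k (A.H (dgf t) j))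
        rw [if_pos htj]
        trivial
      · have hzt : z t = 0 := hp _ _ (by omega) _
        rw [hzt, A.zero_mul']
        exact Submodule.zero_mem _
    exact happ2 y

/-- Row surjectivity: `eps` hits everything modulo `aug`. -/
theorem row_surj (hG : G.IsRes) (x : Π₀ t : σ, A.H (dgf t) j) :
    ∃ w : TT G (FreeR A σ dgf) 0,
      eps G (FreeR A σ dgf) w - ofD dgf x ∈ (FreeR A σ dgf).aug j := by
  induction x using DFinsupp.induction with
  | h0 =>
    refine ⟨0, ?_⟩
    have h0 : ofD dgf (0 : Π₀ t : σ, A.H (dgf t) j) = 0 := rfl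
    rw [map_zero, h0, sub_zero]
    exact AddSubgroup.zero_mem _
  | ha t c f hf hc ih =>
    obtain ⟨w₂, hw₂⟩ := ih
    obtain ⟨v, hv⟩ := hG.1 (dgf t) (Submodule.Quotient.mk c)
    refine ⟨tstar G (FreeR A σ dgf) 0 (DFinsupp.single t (A.one (dgf t))) v + w₂, ?_⟩
    rw [map_add]
    have h1 := eps_tstar G (FreeR A σ dgf) (DFinsupp.single t (A.one (dgf t))) v
    rw [hv] at h1
    have h2 := act_glift_congr (hp := hp) (FreeR A σ dgf)
      (DFinsupp.single t (A.one (dgf t))) c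
      ((Submodule.Quotient.mk c) : (A0e A hp j).M (dgf t)) rfl
    have h3 : (FreeR A σ dgf).act (DFinsupp.single t (A.one (dgf t))) c
        = DFinsupp.single t c := by rw [FreeR_act_single, A.one_mul]
    rw [h3] at h2
    have h2' : (FreeR A σ dgf).act (DFinsupp.single t (A.one (dgf t)))
        (glift (hp := hp) (j := j) (Submodule.Quotient.mk c))
        - ofD dgf (DFinsupp.single t c) ∈ (FreeR A σ dgf).aug j := h2
    have hofd : ofD dgf (DFinsupp.single t c + f)
        = ofD dgf (DFinsupp.single t c) + ofD dgf f := rfl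
    rw [hofd]
    have hsplit :
        eps G (FreeR A σ dgf)
            (tstar G (FreeR A σ dgf) 0 (DFinsupp.single t (A.one (dgf t))) v)
          + eps G (FreeR A σ dgf) w₂ - (ofD dgf (DFinsupp.single t c) + ofD dgf f)
        = (eps G (FreeR A σ dgf)
            (tstar G (FreeR A σ dgf) 0 (DFinsupp.single t (A.one (dgf t))) v)
            - (FreeR A σ dgf).act (DFinsupp.single t (A.one (dgf t)))
                (glift (hp := hp) (j := j) (Submodule.Quotient.mk c)))
          + ((FreeR A σ dgf).act (DFinsupp.single t (A.one (dgf t)))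
                (glift (hp := hp) (j := j) (Submodule.Quotient.mk c))
              - ofD dgf (DFinsupp.single t c))
          + (eps G (FreeR A σ dgf) w₂ - ofD dgf f) := by abel
    rw [hsplit]
    exact AddSubgroup.add_mem _ (AddSubgroup.add_mem _ h1 h2') hw₂

/-- Row exactness at the augmentation. -/
theorem row_exact0 (hG : G.IsRes) (x : TT G (FreeR A σ dgf) 0)
    (hx : eps G (FreeR A σ dgf) x ∈ (FreeR A σ dgf).aug j) :
    ∃ y, tdel G (FreeR A σ dgf) 0 y = x := by
  have hcomp : ∀ t, ∃ u, (G.d 0).addHom (dgf t) u = swp G dgf 0 x t := by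
    intro t
    have hz : G.aug.f (dgf t) (swp G dgf 0 x t) = 0 := by
      have h1 : G.aug.f (dgf t) (swp G dgf 0 x t)
          = (Submodule.Quotient.mk (rowAug G dgf t (swp G dgf 0 x t))
              : (A0e A hp j).M (dgf t)) := (rowAug_mk G dgf t _).symm
      have h2 : rowAug G dgf t (swp G dgf 0 x t)
          = DFinsupp.evalAddMonoidHom t (eps G (FreeR A σ dgf) x) := by
        rw [eps_swp]
        rfl
      rw [h1, h2, freeAug_mk_zero (hp := hp) dgf hx t]; rfl
    exact hG.2.2.1 (dgf t) (swp G dgf 0 x t) hz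
  obtain ⟨Y, hY⟩ := dfinsupp_mapRange_surj _ _ hcomp
  refine ⟨swq G dgf 1 Y, swp_injective G dgf 0 ?_⟩
  erw [swp_tdel, swp_swq, hY]

/-- Row exactness in higher degrees. -/
theorem row_exact (hG : G.IsRes) (q : ℕ) (x : TT G (FreeR A σ dgf) (q+1))
    (hx : tdel G (FreeR A σ dgf) q x = 0) :
    ∃ y, tdel G (FreeR A σ dgf) (q+1) y = x := by
  have h1 : DFinsupp.mapRange.addMonoidHom (fun t => (G.d q).addHom (dgf t))
      (swp G dgf (q+1) x) = 0 := by
    erw [← swp_tdel, hx, map_zero]; rfl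
  have hcomp : ∀ t, ∃ u, (G.d (q+1)).addHom (dgf t) u = swp G dgf (q+1) x t := by
    intro t
    have h1t : DFinsupp.mapRange.addMonoidHom (fun t => (G.d q).addHom (dgf t))
        (swp G dgf (q+1) x) t = 0 := by rw [h1]; rfl
    erw [mapRangeAdd_apply] at h1t
    exact hG.2.2.2.2 q (dgf t) (swp G dgf (q+1) x t) h1t
  obtain ⟨Y, hY⟩ := dfinsupp_mapRange_surj _ _ hcomp
  refine ⟨swq G dgf (q+2) Y, swp_injective G dgf (q+1) ?_⟩
  erw [swp_tdel, swp_swq, hY]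

/-- Everything above the length of `G` vanishes. -/
theorem tt_eq_zero {n : ℕ} (hlen : G.LenLE n) {q : ℕ} (hq : n < q) (M : RMod A)
    (x : TT G M q) : x = 0 := by
  ext s
  exact ((hlen q hq).false s).elim

end ChaseSecD

section ChaseSecE

open scoped Classical

variable {k : Type} [Field k] {A : ZAlg k}
variable {hp : A.posGraded} {j : ℤ}
variable (G : FreeResL (A0e A hp j))

/-- The cocycle condition in the rows. -/
def rowKer {σ : Type} (dgf : σ → ℤ) (q : ℕ) (w : TT G (FreeR A σ dgf) q) : Prop :=
  match q with
  | 0 => eps G (FreeR A σ dgf) w ∈ (FreeR A σ dgf).aug j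
  | (q'+1) => tdel G (FreeR A σ dgf) q' w = 0

theorem row_lift {σ : Type} (dgf : σ → ℤ) (hG : G.IsRes) (q : ℕ)
    (w : TT G (FreeR A σ dgf) q) (hw : rowKer G dgf q w) :
    ∃ y, tdel G (FreeR A σ dgf) q y = w := by
  cases q with
  | zero => exact row_exact0 G dgf hG w hw
  | succ q' => exact row_exact G dgf hG q' w hw

/-- The staircase chase through the double complex. -/
theorem chase {N : RMod A} (R : FreeResR N) (hR : R.IsRes) (hG : G.IsRes)
    {n : ℕ} (hlen : G.LenLE n) :
    ∀ (p q : ℕ), p + q = n → ∀ x : TT G (R.F (p+1)) q,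
      rowKer G (R.deg p) q (Tmap G (R.d p) q x) →
      ∃ (u : TT G (R.F (p+2)) q) (v : TT G (R.F (p+1)) (q+1)),
        Tmap G (R.d (p+1)) q u = x - tdel G (R.F (p+1)) q v := by
  intro p
  induction p with
  | zero =>
    intro q hq x hx
    obtain ⟨x₁, hx₁⟩ := row_lift G (R.deg 0) hG q (Tmap G (R.d 0) q x) hx
    have hx₁0 : x₁ = 0 := tt_eq_zero G hlen (by omega) _ x₁
    have hw0 : Tmap G (R.d 0) q x = 0 := by
      rw [← hx₁, hx₁0, map_zero]
    obtain ⟨u, hu⟩ := Tmap_exact G (R.d 0) (R.d 1) (hR.2.2.2.2 0) q x hw0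
    refine ⟨u, 0, ?_⟩
    rw [map_zero, sub_zero]
    exact hu
  | succ p ih =>
    intro q hq x hx
    obtain ⟨x₁, hx₁⟩ := row_lift G (R.deg (p+1)) hG q (Tmap G (R.d (p+1)) q x) hx
    have hK : rowKer G (R.deg p) (q+1) (Tmap G (R.d p) (q+1) x₁) := by
      show tdel G (R.F p) q (Tmap G (R.d p) (q+1) x₁) = 0
      rw [tdel_Tmap, hx₁]
      exact Tmap_Tmap_zero G (R.d p) (R.d (p+1)) (hR.2.2.2.1 p) q x
    obtain ⟨u', v', huv'⟩ := ih (q+1) (by omega) x₁ hK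
    have hz : Tmap G (R.d (p+1)) q (x - tdel G (R.F (p+2)) q u') = 0 := by
      rw [map_sub, ← tdel_Tmap, huv', map_sub, hx₁]
      rw [tdel_tdel G hG]
      abel
    obtain ⟨u, hu⟩ := Tmap_exact G (R.d (p+1)) (R.d (p+2)) (hR.2.2.2.2 (p+1)) q
      (x - tdel G (R.F (p+2)) q u') hz
    exact ⟨u, u', hu⟩

/-- `Tor_{n+1}(N, A0e_j)` vanishes when `G` has length `≤ n`: the key statement. -/
theorem torVanish {N : RMod A} (R : FreeResR N) (hR : R.IsRes) (hmin : R.IsMinimal)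
    (hG : G.IsRes) {n : ℕ} (hlen : G.LenLE n) (x : (R.F (n+1)).M j) :
    ∃ y : (R.F (n+2)).M j, x - (R.d (n+1)).f j y ∈ (R.F (n+1)).aug j := by
  obtain ⟨x₀, hx₀⟩ := row_surj G (R.deg (n+1)) hG x
  have hK : rowKer G (R.deg n) 0 (Tmap G (R.d n) 0 x₀) := by
    show eps G (R.F n) (Tmap G (R.d n) 0 x₀) ∈ (R.F n).aug j
    rw [eps_natural]
    have hsplit : eps G (R.F (n+1)) x₀
        = ofD (R.deg (n+1)) x + (eps G (R.F (n+1)) x₀ - ofD (R.deg (n+1)) x) := by abel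
    rw [hsplit, (R.d n).map_add]
    exact AddSubgroup.add_mem _ (hmin n j _) ((R.d n).map_aug_s10 hx₀)
  obtain ⟨u, v, huv⟩ := chase G R hR hG hlen n 0 (by omega) x₀ hK
  refine ⟨eps G (R.F (n+2)) u, ?_⟩
  have h1 := congrArg (eps G (R.F (n+1))) huv
  rw [eps_natural, map_sub] at h1
  have h2 : eps G (R.F (n+1)) (tdel G (R.F (n+1)) 0 v) ∈ (R.F (n+1)).aug j :=
    eps_tdel_mem G hG (R.F (n+1)) v
  show ofD (R.deg (n+1)) x - (R.d (n+1)).f j (eps G (R.F (n+2)) u) ∈ (R.F (n+1)).aug j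
  have key : ofD (R.deg (n+1)) x - (R.d (n+1)).f j (eps G (R.F (n+2)) u)
      = (eps G (R.F (n+1)) (tdel G (R.F (n+1)) 0 v))
        - (eps G (R.F (n+1)) x₀ - ofD (R.deg (n+1)) x) := by
    rw [h1]
    abel
  rw [key]
  exact AddSubgroup.sub_mem _ h2 hx₀

end ChaseSecE

/-- Let `A` be a connected `ℤ`-algebra with
`sup_j pd(A_0e_j) = n < ∞`.  Then every left-bounded graded right module `N`
has `pd N ≤ n`. -/
theorem pd_le_of_sup_pd_left {k : Type} [Field k]
    (A : ZAlg k) (hA : A.connected) (n : ℕ)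
    (h : (⨆ j : ℤ, (A0e A hA.1 j).pdim) = (n : ℕ∞))
    (N : RMod A) (hN : N.leftBounded) :
    N.pdim ≤ (n : ℕ∞) := by
  classical
  obtain ⟨d, hd⟩ := hN
  -- extract a length-≤n resolution of each A0e_j from the hypothesis
  have hGex : ∀ i : ℤ, ∃ Gr : FreeResL (A0e A hA.1 i), Gr.IsRes ∧ Gr.LenLE n := by
    intro i
    have hle : (A0e A hA.1 i).pdim ≤ (n : ℕ∞) :=
      h ▸ le_iSup (fun j => (A0e A hA.1 j).pdim) i
    have hlt : (A0e A hA.1 i).pdim < (n : ℕ∞) + 1 :=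
      lt_of_le_of_lt hle (by exact_mod_cast Nat.lt_succ_self n)
    rw [LMod.pdim] at hlt
    rw [sInf_lt_iff] at hlt
    obtain ⟨e, heS, he⟩ := hlt
    obtain ⟨m, rfl, hm⟩ := heS
    have hmn : m ≤ n := by
      have : (m : ℕ∞) < ((n+1 : ℕ) : ℕ∞) := by exact_mod_cast he
      exact_mod_cast Nat.lt_succ_iff.mp (by exact_mod_cast this)
    obtain ⟨Gr, hres, hlen⟩ := hm
    exact ⟨Gr, hres, fun m' hm' => hlen m' (by omega)⟩
  have hres := minRes_isRes hA N d hd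
  have hmin := minRes_isMinimal hA N d hd
  have hempty : IsEmpty ((minRes hA N d hd).idx (n+1)) := by
    by_contra hne
    rw [not_isEmpty_iff] at hne
    obtain ⟨s⟩ := hne
    obtain ⟨Gr, hGres, hGlen⟩ := hGex ((minRes hA N d hd).deg (n+1) s)
    obtain ⟨y, hy⟩ := torVanish Gr (minRes hA N d hd) hres hmin hGres hGlen
      (DFinsupp.single s (A.one ((minRes hA N d hd).deg (n+1) s)))
    have hdy : ((minRes hA N d hd).d (n+1)).f _ y
        ∈ ((minRes hA N d hd).F (n+1)).aug ((minRes hA N d hd).deg (n+1) s) :=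
      hmin (n+1) _ y
    have hmem : (DFinsupp.single s (A.one ((minRes hA N d hd).deg (n+1) s))
          : ((minRes hA N d hd).F (n+1)).M ((minRes hA N d hd).deg (n+1) s))
        ∈ ((minRes hA N d hd).F (n+1)).aug ((minRes hA N d hd).deg (n+1) s) := by
      have hsum := AddSubgroup.add_mem _ hy hdy
      erw [sub_add_cancel] at hsum; exact hsum
    have hzero := freeR_aug_comp hA.1 hmem s rfl
    rw [DFinsupp.single_eq_same] at hzero
    exact (hA.2 _).1 hzero
  have hlen := minRes_lenLE hA N d hd n hempty
  refine sInf_le ?_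
  exact ⟨n, rfl, minRes hA N d hd, hres, hlen⟩
end
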